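/- arXiv:1508.01816 — 8 statements merged into one kernel-verified Lean document; each statement's English description precedes it below -/
import Mathlib

section
/- For all nonnegative integers m, n with n ≥ m and all complex numbers w₁, w₂, one has H_{m,n}(w₁,w₂) = (-1)ᵐ m! w₂^{n-m} L_m^{(n-m)}(w₁ w₂). -/
noncomputable def H2 (m n : ℕ) (z₁ z₂ : ℂ) : ℂ :=
  ∑ k ∈ Finset.range (min m n + 1),
    (-1 : ℂ) ^ k * (Nat.factorial k) * (Nat.choose m k) * (Nat.choose n k) *
      z₁ ^ (m - k) * z₂ ^ (n - k)

/-- Generalized Laguerre polynomial `L_n^{(α)}(x)`, with integer parameter `α`,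
defined via `L_n^{(α)}(x) = ∑_{k=0}^n (-x)^k/k! · (∏_{i=k+1}^n (α+i)) / (n-k)!`,
which agrees with `∑_k (-1)^k C(n+α, n-k) x^k/k!` when `n + α ≥ 0`. -/
noncomputable def lagC (n : ℕ) (α : ℤ) (x : ℂ) : ℂ :=
  ∑ k ∈ Finset.range (n + 1),
    (-x) ^ k / (Nat.factorial k) *
      ((∏ i ∈ Finset.Icc (k + 1) n, ((α : ℂ) + (i : ℕ))) / (Nat.factorial (n - k)))

/-! Reversing the summation index `k ↦ m - k` in `H2 m n` puts it in the shape of the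
Laguerre sum: `(m - k)! * C(m, m - k) = m! / k!`, and for the nonnegative parameter
`α = n - m` the coefficient `∏_{i=k+1}^m (α + i) / (m - k)!` of `lagC` is `C(n, m - k)`. -/

open Finset Nat

theorem prod_Icc_add_eq_factorial_mul_choose (c k m : ℕ) (hk : k ≤ m) :
    ∏ i ∈ Icc (k + 1) m, (c + i) = (m - k)! * (c + m).choose (m - k) := by
  rw [show c + m = c + k + (m - k) by omega, ← ascFactorial_eq_factorial_mul_choose,
    ascFactorial_eq_prod_range, ← Ico_add_one_right_eq_Icc, prod_Ico_eq_prod_range,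
    show m + 1 - (k + 1) = m - k by omega]
  exact prod_congr rfl fun i _ ↦ by omega

theorem lagC_natCast (m c : ℕ) (x : ℂ) :
    lagC m c x = ∑ k ∈ range (m + 1), (-1) ^ k * ((m + c).choose (m - k) : ℂ) * x ^ k / k ! := by
  refine sum_congr rfl fun k hk ↦ ?_
  have hkm : k ≤ m := by simpa [Nat.lt_succ_iff] using hk
  have hprod : ∏ i ∈ Icc (k + 1) m, (((c : ℤ) : ℂ) + (i : ℕ)) =
      (m - k)! * ((m + c).choose (m - k) : ℂ) := by
    rw [add_comm m c]
    exact_mod_cast prod_Icc_add_eq_factorial_mul_choose c k m hkm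
  rw [hprod, neg_pow, mul_div_cancel_left₀ _ (by exact_mod_cast (m - k).factorial_ne_zero)]
  ring

theorem H2_self_add (m c : ℕ) (z₁ z₂ : ℂ) :
    H2 m (m + c) z₁ z₂ = (-1) ^ m * m ! * z₂ ^ c *
      ∑ k ∈ range (m + 1), (-1) ^ k * ((m + c).choose (m - k) : ℂ) * (z₁ * z₂) ^ k / k ! := by
  rw [H2, min_eq_left (le_add_right le_rfl), mul_sum, ← sum_range_reflect]
  refine sum_congr rfl fun k hk ↦ ?_
  have hkm : k ≤ m := by simpa [Nat.lt_succ_iff] using hk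
  obtain ⟨i, rfl⟩ : ∃ i, m = i + k := ⟨m - k, by omega⟩
  have hfact : ((i + k)! : ℂ) = (i + k).choose k * k ! * i ! := by
    exact_mod_cast (Nat.add_sub_cancel i k ▸ choose_mul_factorial_mul_factorial (le_add_left k i)).symm
  simp only [show i + k - i = k by omega, show i + k + c - i = c + k by omega,
    Nat.add_sub_cancel, choose_symm_add, hfact]
  have hsign : (-1 : ℂ) ^ i = (-1) ^ (i + k) * (-1) ^ k := by
    rw [pow_add, mul_assoc, ← mul_pow]
    norm_num
  have hk0 : (k ! : ℂ) ≠ 0 := by exact_mod_cast k.factorial_ne_zero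
  rw [hsign]
  field_simp
  ring

theorem H2_eq_laguerre_of_le (m n : ℕ) (h : m ≤ n) (w₁ w₂ : ℂ) :
    H2 m n w₁ w₂ = (-1 : ℂ) ^ m * (Nat.factorial m) * w₂ ^ (n - m) *
      lagC m ((n : ℤ) - m) (w₁ * w₂) := by
  obtain ⟨c, rfl⟩ := Nat.exists_eq_add_of_le h
  rw [H2_self_add, add_tsub_cancel_left, Nat.cast_add, add_sub_cancel_left, lagC_natCast]
end

section
/- For every nonnegative integer n and every real number x, the n-th Hermite polynomial satisfies the integral representation H_n(x) e^{-x²} = ((-2i)ⁿ/√π) ∫_{-∞}^{∞} tⁿ e^{-t² + 2ixt} dt. -/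
open Complex

/-- Physicists' Hermite polynomial `H_n(x) = n! ∑_{k=0}^{⌊n/2⌋} (-1)^k (2x)^{n-2k}/(k!(n-2k)!)`. -/
noncomputable def Hpoly (n : ℕ) (x : ℂ) : ℂ :=
  (Nat.factorial n) * ∑ k ∈ Finset.range (n / 2 + 1),
    (-1 : ℂ) ^ k * (2 * x) ^ (n - 2 * k) / ((Nat.factorial k) * (Nat.factorial (n - 2 * k)))

/-!
Both sides, as sequences in `n`, satisfy the three-term recurrence
`u (n + 2) = 2 x u (n + 1) - 2 (n + 1) u n` and agree for `n = 0, 1`. For the Hermite side this is a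
coefficient identity (Pascal's rule plus `(n + 1) C(n, 2k) = (2k + 1) C(n + 1, 2k + 1)`). For
`J n = ∫ tⁿ e^{-t² + 2ixt} dt`, integrating the derivative of the integrand over `ℝ` gives
`2 J (n + 1) = n J (n - 1) + 2ix J n`, which the factor `(-2i)ⁿ / √π` turns into the Hermite
recurrence; `J 0 = √π e^{-x²}` is the Fourier transform of the Gaussian.
-/

theorem eq_of_two_step_recurrence {α : Type*} (f : ℕ → α → α → α) {a b : ℕ → α}
    (ha : ∀ n, a (n + 2) = f n (a n) (a (n + 1))) (hb : ∀ n, b (n + 2) = f n (b n) (b (n + 1)))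
    (h0 : a 0 = b 0) (h1 : a 1 = b 1) : a = b := by
  funext n
  induction n using Nat.twoStepInduction with
  | zero => exact h0
  | one => exact h1
  | more n ih0 ih1 => rw [ha, hb, ih0, ih1]

section HermiteRecurrence

open Finset Nat

/-- `n! / (k! (n - 2k)!)`, written so that it vanishes when `n < 2k`. -/
def hermiteCoeff (n k : ℕ) : ℕ := n.choose (2 * k) * k.centralBinom * k !

lemma hermiteCoeff_eq_zero {n k : ℕ} (h : n < 2 * k) : hermiteCoeff n k = 0 := by
  simp [hermiteCoeff, Nat.choose_eq_zero_of_lt h]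

lemma hermiteCoeff_mul_factorial_mul_factorial {n k : ℕ} (h : 2 * k ≤ n) :
    hermiteCoeff n k * k ! * (n - 2 * k)! = n ! := by
  have central : k.centralBinom * k ! * k ! = (2 * k)! := by
    simpa [centralBinom_eq_two_mul_choose, two_mul] using
      choose_mul_factorial_mul_factorial (show k ≤ 2 * k by omega)
  rw [hermiteCoeff, ← choose_mul_factorial_mul_factorial h, ← central]
  ring

lemma hermiteCoeff_succ_succ (n k : ℕ) :
    hermiteCoeff (n + 2) (k + 1)
      = hermiteCoeff (n + 1) (k + 1) + 2 * (n + 1) * hermiteCoeff n k := by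
  have pascal : (n + 2).choose (2 * k + 2)
      = (n + 1).choose (2 * k + 1) + (n + 1).choose (2 * k + 2) :=
    choose_succ_succ (n + 1) (2 * k + 1)
  have absorb := add_one_mul_choose_eq n (2 * k)
  have central := succ_mul_centralBinom_succ k
  simp only [hermiteCoeff, factorial_succ, show 2 * (k + 1) = 2 * k + 2 by ring, pascal]
  linear_combination (n + 1).choose (2 * k + 1) * k ! * central - 2 * k.centralBinom * k ! * absorb

noncomputable def hermiteTerm (n k : ℕ) (x : ℂ) : ℂ :=
  (-1) ^ k * hermiteCoeff n k * (2 * x) ^ (n - 2 * k)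

lemma Hpoly_eq_sum_hermiteTerm {n m : ℕ} (hm : n / 2 < m) (x : ℂ) :
    Hpoly n x = ∑ k ∈ range m, hermiteTerm n k x := by
  rw [Hpoly, mul_sum, ← sum_subset (range_subset_range.mpr (by omega : n / 2 + 1 ≤ m))]
  · refine sum_congr rfl fun k hk => ?_
    have h2k : 2 * k ≤ n := by simp only [mem_range] at hk; omega
    have hcoeff : (n ! : ℂ) = hermiteCoeff n k * k ! * (n - 2 * k)! := by
      exact_mod_cast (hermiteCoeff_mul_factorial_mul_factorial h2k).symm
    have hpos : (k ! * (n - 2 * k)! : ℂ) ≠ 0 := by norm_cast; positivity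
    rw [hermiteTerm, hcoeff, mul_div_assoc', div_eq_iff hpos]
    ring
  · intro k _ hk
    have : n < 2 * k := by simp only [mem_range] at hk; omega
    simp [hermiteTerm, hermiteCoeff_eq_zero this]

lemma hermiteTerm_succ_succ (n k : ℕ) (x : ℂ) :
    hermiteTerm (n + 2) (k + 1) x
      = 2 * x * hermiteTerm (n + 1) (k + 1) x - 2 * (n + 1) * hermiteTerm n k x := by
  have hcoeff : (hermiteCoeff (n + 2) (k + 1) : ℂ)
      = hermiteCoeff (n + 1) (k + 1) + 2 * (n + 1) * hermiteCoeff n k := by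
    exact_mod_cast hermiteCoeff_succ_succ n k
  have hexp : n + 2 - 2 * (k + 1) = n - 2 * k := by omega
  unfold hermiteTerm
  rw [hexp, hcoeff]
  rcases lt_or_ge (2 * k) n with hk | hk
  · rw [show n - 2 * k = n + 1 - 2 * (k + 1) + 1 by omega, pow_succ]
    ring
  · rw [hermiteCoeff_eq_zero (show n + 1 < 2 * (k + 1) by omega)]
    ring

lemma Hpoly_add_two (n : ℕ) (x : ℂ) :
    Hpoly (n + 2) x = 2 * x * Hpoly (n + 1) x - 2 * (n + 1) * Hpoly n x := by
  have term_zero (m : ℕ) : hermiteTerm m 0 x = (2 * x) ^ m := by simp [hermiteTerm, hermiteCoeff]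
  rw [Hpoly_eq_sum_hermiteTerm (m := n + 2) (by omega),
    Hpoly_eq_sum_hermiteTerm (m := n + 2) (by omega),
    Hpoly_eq_sum_hermiteTerm (m := n + 1) (by omega), sum_range_succ' _ (n + 1),
    sum_range_succ' (fun k => hermiteTerm (n + 1) k x)]
  simp only [hermiteTerm_succ_succ, sum_sub_distrib, ← mul_sum, term_zero]
  ring

lemma Hpoly_zero (x : ℂ) : Hpoly 0 x = 1 := by simp [Hpoly]

lemma Hpoly_one (x : ℂ) : Hpoly 1 x = 2 * x := by simp [Hpoly]

end HermiteRecurrence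

section HermiteIntegral

open Real MeasureTheory Filter Topology

lemma ofReal_sqrt_pi_ne_zero : ((√π : ℝ) : ℂ) ≠ 0 :=
  ofReal_ne_zero.mpr (sqrt_ne_zero'.mpr pi_pos)

noncomputable def hermiteIntegrand (x : ℝ) (n : ℕ) (t : ℝ) : ℂ :=
  (t : ℂ) ^ n * cexp (-(t : ℂ) ^ 2 + 2 * I * x * t)

variable (x : ℝ)

lemma norm_hermiteIntegrand (n : ℕ) (t : ℝ) :
    ‖hermiteIntegrand x n t‖ = |t| ^ n * Real.exp (-1 * t ^ 2) := by
  have hre : (-(t : ℂ) ^ 2 + 2 * I * x * t).re = -1 * t ^ 2 := by simp [sq]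
  rw [hermiteIntegrand, norm_mul, norm_pow, norm_real, Real.norm_eq_abs, norm_exp, hre]

lemma integrable_hermiteIntegrand (n : ℕ) : Integrable (hermiteIntegrand x n) := by
  have hmoment : Integrable fun t : ℝ => t ^ (n : ℝ) * Real.exp (-1 * t ^ 2) :=
    integrable_rpow_mul_exp_neg_mul_sq one_pos (by linarith [(n.cast_nonneg : (0 : ℝ) ≤ n)])
  have hcont : Continuous (hermiteIntegrand x n) := by unfold hermiteIntegrand; fun_prop
  refine hmoment.norm.mono' hcont.aestronglyMeasurable (.of_forall fun t => ?_)
  simp [norm_hermiteIntegrand]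

lemma tendsto_hermiteIntegrand_cocompact (n : ℕ) :
    Tendsto (hermiteIntegrand x n) (cocompact ℝ) (𝓝 0) := by
  rw [tendsto_zero_iff_norm_tendsto_zero]
  simpa [norm_hermiteIntegrand] using tendsto_rpow_abs_mul_exp_neg_mul_sq_cocompact one_pos n

lemma hasDerivAt_hermiteIntegrand (n : ℕ) (t : ℝ) :
    HasDerivAt (hermiteIntegrand x n) (n * hermiteIntegrand x (n - 1) t
      + 2 * I * x * hermiteIntegrand x n t - 2 * hermiteIntegrand x (n + 1) t) t := by
  have h := ((hasDerivAt_pow n (t : ℂ)).mul (((hasDerivAt_pow 2 (t : ℂ)).neg.add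
    ((hasDerivAt_id (t : ℂ)).const_mul (2 * I * x))).cexp)).comp_ofReal
  refine h.congr_deriv ?_
  simp only [hermiteIntegrand, Pi.add_apply, Pi.neg_apply, id_eq]
  push_cast
  ring

lemma integral_hermiteIntegrand_succ (n : ℕ) :
    2 * (∫ t, hermiteIntegrand x (n + 1) t)
      = n * (∫ t, hermiteIntegrand x (n - 1) t) + 2 * I * x * ∫ t, hermiteIntegrand x n t := by
  have hint := integrable_hermiteIntegrand x
  have hsum : Integrable fun t =>
      n * hermiteIntegrand x (n - 1) t + 2 * I * x * hermiteIntegrand x n t :=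
    ((hint _).const_mul _).add ((hint _).const_mul _)
  have hvanish := tendsto_hermiteIntegrand_cocompact x n
  rw [cocompact_eq_atBot_atTop] at hvanish
  have hparts := integral_of_hasDerivAt_of_tendsto (hasDerivAt_hermiteIntegrand x n)
    (hsum.sub ((hint _).const_mul 2)) (hvanish.mono_left le_sup_left)
    (hvanish.mono_left le_sup_right)
  rw [sub_zero, integral_sub hsum ((hint _).const_mul 2), integral_add ((hint _).const_mul _)
    ((hint _).const_mul _), integral_const_mul, integral_const_mul, integral_const_mul] at hparts
  linear_combination -hparts

lemma integral_hermiteIntegrand_zero :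
    ∫ t, hermiteIntegrand x 0 t = √π * Real.exp (-x ^ 2) := by
  have h := integral_cexp_quadratic (b := -1) (by simp) (2 * I * x) 0
  simp only [hermiteIntegrand, pow_zero, one_mul]
  convert h using 1
  · exact integral_congr_ae (.of_forall fun t => by simp only; ring_nf)
  · have hsqrt : ((√π : ℝ) : ℂ) = (π : ℂ) ^ (1 / 2 : ℂ) := by
      rw [sqrt_eq_rpow, ofReal_cpow pi_pos.le]
      norm_num
    rw [neg_neg, div_one, ← hsqrt, ofReal_exp]
    congr 2
    push_cast
    linear_combination -x ^ 2 * I_sq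

noncomputable def scaledHermiteIntegral (n : ℕ) : ℂ :=
  (-2 * I) ^ n / √π * ∫ t, hermiteIntegrand x n t

lemma scaledHermiteIntegral_zero : scaledHermiteIntegral x 0 = Real.exp (-x ^ 2) := by
  have := ofReal_sqrt_pi_ne_zero
  rw [scaledHermiteIntegral, integral_hermiteIntegrand_zero]
  field_simp

lemma scaledHermiteIntegral_one : scaledHermiteIntegral x 1 = 2 * x * Real.exp (-x ^ 2) := by
  have h := integral_hermiteIntegrand_succ x 0
  rw [Nat.cast_zero, zero_mul, zero_add, integral_hermiteIntegrand_zero] at h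
  have hJ : ∫ t, hermiteIntegrand x 1 t = I * x * (√π * Real.exp (-x ^ 2)) := by
    linear_combination h / 2
  have := ofReal_sqrt_pi_ne_zero
  rw [scaledHermiteIntegral, hJ]
  field_simp
  linear_combination (-x : ℂ) * I_sq

lemma scaledHermiteIntegral_add_two (n : ℕ) :
    scaledHermiteIntegral x (n + 2)
      = 2 * x * scaledHermiteIntegral x (n + 1) - 2 * (n + 1) * scaledHermiteIntegral x n := by
  have h := integral_hermiteIntegrand_succ x (n + 1)
  rw [Nat.add_sub_cancel, show n + 1 + 1 = n + 2 from rfl] at h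
  simp only [scaledHermiteIntegral]
  push_cast at h ⊢
  linear_combination
    (-2 * I) ^ n / √π * (-2 * h + 4 * (∫ t, hermiteIntegrand x (n + 2) t) * I_sq)

end HermiteIntegral

theorem hermite_integral_representation (n : ℕ) (x : ℝ) :
    Hpoly n (x : ℂ) * Real.exp (-x ^ 2) =
      (-2 * Complex.I) ^ n / Real.sqrt Real.pi *
        ∫ t : ℝ, (t : ℂ) ^ n * Complex.exp (-(t : ℂ) ^ 2 + 2 * Complex.I * x * t) := by
  refine congrFun (eq_of_two_step_recurrence (α := ℂ) (fun m u v => 2 * x * v - 2 * (m + 1) * u)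
    (a := fun m => Hpoly m x * (Real.exp (-x ^ 2) : ℂ)) (b := scaledHermiteIntegral x)
    (fun m => ?_) (scaledHermiteIntegral_add_two x) ?_ ?_) n
  · simp only [Hpoly_add_two]
    ring
  · rw [Hpoly_zero, one_mul, scaledHermiteIntegral_zero]
  · rw [Hpoly_one, scaledHermiteIntegral_one]
end

section
/- For all nonnegative integers m, n and every complex number z, one has the bound |H_{m,n}(z̄, z)| ≤ e^{|z|²} √(m! n!). -/
open Complex

/-!
Write `H_{m,n}` for `H2 m n z̄ z`. The ladder recurrences
`H_{m,n+1} = z H_{m,n} - m H_{m-1,n}` and `H_{m+1,n} = z̄ H_{m,n} - n H_{m,n-1}` turn the Gram form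
`G(n, n') = H2Gram z n n' = ∑ₘ H_{m,n} conj H_{m,n'} / m!` into `G(n+1, n') = n' G(n, n'-1)`;
together with `G(0, 0) = ∑ₘ |z|^{2m} / m! = e^{|z|²}` this gives
`G(n, n') = δ_{n n'} n! e^{|z|²}`, i.e. the vectors `(H_{m,n} / √(m! n!))ₘ` are orthogonal of
norm `e^{|z|²/2}`. A single term of `G(n, n)` is then bounded by the whole sum:
`|H_{m,n}|² ≤ m! n! e^{|z|²}`.
-/

open Finset Nat ComplexConjugate

theorem H2_comm (m n : ℕ) (a b : ℂ) : H2 m n a b = H2 n m b a := by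
  rw [H2, H2, min_comm]
  exact sum_congr rfl fun k _ => by ring

@[simp]
theorem H2_zero_right (m : ℕ) (a b : ℂ) : H2 m 0 a b = a ^ m := by
  simp [H2]

theorem H2_eq_sum_descFactorial (m n : ℕ) (a b : ℂ) :
    H2 m n a b = ∑ k ∈ range (n + 1),
      (-1 : ℂ) ^ k * n.choose k * m.descFactorial k * a ^ (m - k) * b ^ (n - k) := by
  rw [H2, ← sum_subset (range_subset_range.mpr (by omega : min m n + 1 ≤ n + 1))]
  · refine sum_congr rfl fun k _ => ?_
    rw [Nat.descFactorial_eq_factorial_mul_choose]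
    push_cast
    ring
  · intro k hk hk'
    simp only [mem_range] at hk hk'
    rw [Nat.descFactorial_eq_zero_iff_lt.mpr (by omega)]
    simp

theorem H2_succ_right (m n : ℕ) (a b : ℂ) :
    H2 m (n + 1) a b = b * H2 m n a b - m * H2 (m - 1) n a b := by
  have lower : (m : ℂ) * H2 (m - 1) n a b = ∑ k ∈ range (n + 1),
      (-1 : ℂ) ^ k * n.choose k * m.descFactorial (k + 1) * a ^ (m - (k + 1)) * b ^ (n - k) := by
    rw [H2_eq_sum_descFactorial, mul_sum]
    refine sum_congr rfl fun k _ => ?_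
    rcases m with _ | m
    · simp
    · rw [Nat.succ_descFactorial_succ, Nat.add_sub_cancel, Nat.add_sub_add_right]
      push_cast
      ring
  have raise : b * H2 m n a b = b ^ (n + 1) * a ^ m + ∑ k ∈ range (n + 1),
      (-1 : ℂ) ^ (k + 1) * n.choose (k + 1) * m.descFactorial (k + 1) * a ^ (m - (k + 1)) *
        b ^ (n - k) := by
    rw [H2_eq_sum_descFactorial, mul_sum, sum_range_succ', sum_range_succ _ n]
    simp only [Nat.choose_succ_self, Nat.cast_zero, mul_zero, zero_mul, add_zero]
    rw [add_comm]
    congr 1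
    · simp only [pow_zero, choose_zero_right, cast_one, mul_one, descFactorial_zero, tsub_zero,
        one_mul, pow_succ]
      ring
    · refine sum_congr rfl fun k hk => ?_
      rw [show n - k = n - (k + 1) + 1 by rw [mem_range] at hk; omega]
      ring
  rw [lower, raise, H2_eq_sum_descFactorial, sum_range_succ']
  simp only [Nat.choose_succ_succ', Nat.cast_add, Nat.add_sub_add_right, pow_succ, mul_neg, mul_one,
    mul_add, neg_mul, descFactorial_succ, cast_mul, add_mul, sum_add_distrib, sum_neg_distrib,
    pow_zero, choose_zero_right, cast_one, descFactorial_zero,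
    tsub_zero, one_mul]
  ring

theorem H2_succ_left (m n : ℕ) (a b : ℂ) :
    H2 (m + 1) n a b = a * H2 m n a b - n * H2 m (n - 1) a b := by
  rw [H2_comm, H2_succ_right, H2_comm n, H2_comm (n - 1)]

theorem norm_H2_le (m n : ℕ) (a b : ℂ) :
    ‖H2 m n a b‖ ≤ (‖b‖ + 1) ^ n * (2 ^ n * max 1 ‖a‖) ^ m := by
  induction n generalizing m with
  | zero => simpa using pow_le_pow_left₀ (norm_nonneg a) (le_max_right 1 ‖a‖) m
  | succ n ih =>
    set ρ := 2 ^ n * max 1 ‖a‖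
    have hρ : 1 ≤ ρ :=
      one_le_mul_of_one_le_of_one_le (one_le_pow₀ one_le_two) (le_max_left _ _)
    have hm : (m : ℝ) ≤ 2 ^ m := by exact_mod_cast Nat.lt_two_pow_self.le
    have lower : ‖(m : ℂ) * H2 (m - 1) n a b‖ ≤ m * ((‖b‖ + 1) ^ n * ρ ^ m) := by
      rcases m with _ | m
      · simp
      · rw [norm_mul, Complex.norm_natCast]
        gcongr
        exact (ih m).trans (by gcongr; omega)
    calc ‖H2 m (n + 1) a b‖
        ≤ ‖b‖ * ((‖b‖ + 1) ^ n * ρ ^ m) + m * ((‖b‖ + 1) ^ n * ρ ^ m) := by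
          rw [H2_succ_right]
          refine (norm_sub_le _ _).trans (add_le_add ?_ lower)
          rw [norm_mul]
          gcongr
          exact ih m
      _ ≤ (‖b‖ + 1) * 2 ^ m * ((‖b‖ + 1) ^ n * ρ ^ m) := by
          rw [← add_mul]
          gcongr
          nlinarith [hm, one_le_pow₀ (M₀ := ℝ) one_le_two (n := m), norm_nonneg b]
      _ = (‖b‖ + 1) ^ (n + 1) * (2 ^ (n + 1) * max 1 ‖a‖) ^ m := by
          rw [pow_succ, pow_succ, ← mul_comm 2, mul_assoc 2, mul_pow]
          ring

theorem summable_H2_mul_conj_div_factorial (n n' : ℕ) (a b : ℂ) :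
    Summable fun m ↦ H2 m n a b * conj (H2 m n' a b) / m ! := by
  set ρ := 2 ^ n * max 1 ‖a‖
  set ρ' := 2 ^ n' * max 1 ‖a‖
  have hgeom :=
    (Real.summable_pow_div_factorial (ρ * ρ')).mul_left ((‖b‖ + 1) ^ n * (‖b‖ + 1) ^ n')
  refine .of_norm_bounded hgeom fun m ↦ ?_
  rw [norm_div, norm_mul, Complex.norm_conj, Complex.norm_natCast, mul_pow, ← mul_div_assoc]
  gcongr ?_ / _
  calc ‖H2 m n a b‖ * ‖H2 m n' a b‖
      ≤ ((‖b‖ + 1) ^ n * ρ ^ m) * ((‖b‖ + 1) ^ n' * ρ' ^ m) := by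
        gcongr <;> apply norm_H2_le
    _ = _ := by ring

noncomputable def H2Gram (z : ℂ) (n n' : ℕ) : ℂ :=
  ∑' m, H2 m n (conj z) z * conj (H2 m n' (conj z) z) / m !

theorem hasSum_H2Gram (z : ℂ) (n n' : ℕ) :
    HasSum (fun m ↦ H2 m n (conj z) z * conj (H2 m n' (conj z) z) / m !) (H2Gram z n n') :=
  (summable_H2_mul_conj_div_factorial n n' _ _).hasSum

theorem conj_H2Gram (z : ℂ) (n n' : ℕ) : conj (H2Gram z n n') = H2Gram z n' n := by
  rw [H2Gram, Complex.conj_tsum, H2Gram]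
  congr 1 with m
  rw [map_div₀, map_mul, Complex.conj_conj, map_natCast, mul_comm]

theorem H2Gram_zero_zero (z : ℂ) : H2Gram z 0 0 = exp (‖z‖ ^ 2 : ℝ) := by
  have hterm (m : ℕ) :
      H2 m 0 (conj z) z * conj (H2 m 0 (conj z) z) / m ! = (conj z * z) ^ m / m ! := by
    rw [H2_zero_right, map_pow, Complex.conj_conj, mul_pow]
  rw [H2Gram, tsum_congr hterm, Complex.exp_eq_exp_ℂ, NormedSpace.exp_eq_tsum_div,
    Complex.conj_mul']
  push_cast
  rfl

theorem H2Gram_succ_left (z : ℂ) (n n' : ℕ) :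
    H2Gram z (n + 1) n' = n' * H2Gram z n (n' - 1) := by
  -- the cross term of `H2_succ_right`, summed after the shift `m ↦ m + 1` via `H2_succ_left`
  have hu : HasSum (fun m : ℕ ↦
      (m : ℂ) * H2 (m - 1) n (conj z) z * conj (H2 m n' (conj z) z) / (m ! : ℂ))
      (z * H2Gram z n n' - n' * H2Gram z n (n' - 1)) := by
    refine (hasSum_nat_add_iff' 1).mp ?_
    simp only [range_one, sum_singleton, CharP.cast_eq_zero, zero_mul, zero_div, sub_zero]
    convert ((hasSum_H2Gram z n n').mul_left z).sub
      ((hasSum_H2Gram z n (n' - 1)).mul_left (n' : ℂ)) using 2 with m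
    rw [Nat.add_sub_cancel, H2_succ_left, map_sub, map_mul, map_mul, Complex.conj_conj,
      map_natCast, factorial_succ]
    push_cast
    field_simp
  have hsucc := ((hasSum_H2Gram z n n').mul_left z).sub hu
  simp only [← mul_div_assoc, ← mul_assoc, ← sub_div, ← sub_mul, ← H2_succ_right] at hsucc
  rw [H2Gram, hsucc.tsum_eq]
  ring

theorem H2Gram_eq (z : ℂ) (n n' : ℕ) :
    H2Gram z n n' = if n = n' then (n ! : ℂ) * exp (‖z‖ ^ 2 : ℝ) else 0 := by
  induction n generalizing n' with
  | zero =>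
    rcases n' with _ | n'
    · simp [H2Gram_zero_zero]
    · rw [← conj_H2Gram, H2Gram_succ_left]
      simp
  | succ n ih =>
    rcases n' with _ | n'
    · simp [H2Gram_succ_left]
    · simp only [H2Gram_succ_left, Nat.add_sub_cancel, ih, add_left_inj, factorial_succ]
      split_ifs with h
      · subst h
        push_cast
        ring
      · exact mul_zero _

theorem hasSum_norm_H2_sq_div_factorial (z : ℂ) (n : ℕ) :
    HasSum (fun m ↦ ‖H2 m n (conj z) z‖ ^ 2 / m !) (n ! * Real.exp (‖z‖ ^ 2)) := by
  have h := hasSum_H2Gram z n n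
  rw [H2Gram_eq, if_pos rfl] at h
  simp only [Complex.mul_conj', ← Complex.ofReal_exp] at h
  exact_mod_cast h

theorem H2_bound (m n : ℕ) (z : ℂ) :
    ‖H2 m n (starRingEnd ℂ z) z‖ ≤
      Real.exp (‖z‖ ^ 2) * Real.sqrt ((Nat.factorial m) * (Nat.factorial n)) := by
  have hle : ‖H2 m n (conj z) z‖ ^ 2 / m ! ≤ n ! * Real.exp (‖z‖ ^ 2) :=
    le_hasSum (hasSum_norm_H2_sq_div_factorial z n) m fun _ _ ↦ by positivity
  have hexp : Real.exp (‖z‖ ^ 2) ≤ Real.exp (‖z‖ ^ 2) ^ 2 := by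
    rw [sq (Real.exp _), ← Real.exp_add]
    exact Real.exp_le_exp.mpr (le_add_of_nonneg_left (by positivity))
  refine (pow_le_pow_iff_left₀ (norm_nonneg _) (by positivity) two_ne_zero).mp ?_
  rw [mul_pow, Real.sq_sqrt (by positivity)]
  calc ‖H2 m n (conj z) z‖ ^ 2 ≤ m ! * (n ! * Real.exp (‖z‖ ^ 2)) := by
        rwa [div_le_iff₀' (by positivity)] at hle
    _ = Real.exp (‖z‖ ^ 2) * (m ! * n !) := by ring
    _ ≤ Real.exp (‖z‖ ^ 2) ^ 2 * (m ! * n !) := by gcongr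
end

section
/- For all nonnegative integers m, n and complex numbers z₁, z₂, with w = r + is ranging over ℂ (r, s real), one has the integral representation e^{-z₁z₂} H_{m,n}(z₁,z₂) = (1/(π i^{m+n})) ∫_{ℝ²} w̄ᵐ wⁿ exp(-w w̄ + i z₁ w + i z₂ w̄) dr ds. -/
open Complex

open MeasureTheory Filter Set
open scoped Real

noncomputable def gauss (α : ℝ) (x : ℝ) : ℝ := Real.exp (-x^2 + α*x)

lemma gauss_integrable (α : ℝ) : Integrable (gauss α) := by
  have h : ∀ x : ℝ, gauss α x = Real.exp (α^2/4) * Real.exp (-1*((x - α/2)^2)) := by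
    intro x
    rw [gauss, ← Real.exp_add]
    ring_nf
  rw [funext h]
  exact ((integrable_exp_neg_mul_sq one_pos).comp_sub_right (α/2)).const_mul _

lemma gauss_tendsto_atTop (α : ℝ) : Tendsto (gauss α) atTop (nhds 0) := by
  apply Real.tendsto_exp_atBot.comp
  have : ∀ x : ℝ, -x^2 + α*x = x * (α + -x) := by intro x; ring
  simp only [this]
  exact tendsto_id.atTop_mul_atBot₀ (tendsto_atBot_add_const_left atTop α tendsto_neg_atTop_atBot)

lemma gauss_tendsto_atBot (α : ℝ) : Tendsto (gauss α) atBot (nhds 0) := by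
  have h : gauss α = (gauss (-α)) ∘ (fun x : ℝ => -x) := by
    funext x; simp only [Function.comp, gauss, neg_neg]; ring_nf
  rw [h]
  exact (gauss_tendsto_atTop (-α)).comp tendsto_neg_atBot_atTop

noncomputable def Pfun (a b c d : ℂ) (m n : ℕ) (x : ℝ) : ℂ :=
  ((x:ℂ) + a)^m * ((x:ℂ) + b)^n * Complex.exp (-(x:ℂ)^2 + c*(x:ℂ) + d)

lemma exp_abs_le (M t : ℝ) : Real.exp (M*|t|) ≤ Real.exp (M*t) + Real.exp (M*(-t)) := by
  rcases abs_cases t with ⟨h,_⟩|⟨h,_⟩ <;> rw [h]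
  · exact le_add_of_nonneg_right (Real.exp_pos _).le
  · exact le_add_of_nonneg_left (Real.exp_pos _).le

lemma Pfun_norm_bound (a b c d : ℂ) (m n : ℕ) (x : ℝ) :
    ‖Pfun a b c d m n x‖ ≤ Real.exp ((m+n)*(‖a‖+‖b‖) + d.re) *
      (gauss (c.re + (m+n)) x + gauss (c.re - (m+n)) x) := by
  have hre : (-(x:ℂ)^2 + c*(x:ℂ) + d).re = -x^2 + c.re*x + d.re := by
    simp [Complex.add_re, Complex.mul_re, ← Complex.ofReal_pow]
  have hnorm : ‖Pfun a b c d m n x‖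
      = ‖(x:ℂ)+a‖^m * ‖(x:ℂ)+b‖^n * Real.exp (-x^2 + c.re*x + d.re) := by
    rw [Pfun, norm_mul, norm_mul, norm_pow, norm_pow, Complex.norm_exp, hre]
  set K : ℝ := |x| + (‖a‖+‖b‖) with hK
  have hKnn : (0:ℝ) ≤ K := by positivity
  have h1 : ‖(x:ℂ)+a‖ ≤ K := by
    calc ‖(x:ℂ)+a‖ ≤ ‖(x:ℂ)‖ + ‖a‖ := norm_add_le _ _
    _ = |x| + ‖a‖ := by rw [Complex.norm_real, Real.norm_eq_abs]
    _ ≤ K := by rw [hK]; nlinarith [norm_nonneg b]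
  have h2 : ‖(x:ℂ)+b‖ ≤ K := by
    calc ‖(x:ℂ)+b‖ ≤ ‖(x:ℂ)‖ + ‖b‖ := norm_add_le _ _
    _ = |x| + ‖b‖ := by rw [Complex.norm_real, Real.norm_eq_abs]
    _ ≤ K := by rw [hK]; nlinarith [norm_nonneg a]
  have hKexp : K ≤ Real.exp K := by nlinarith [Real.add_one_le_exp K]
  have step1 : ‖Pfun a b c d m n x‖ ≤ K^(m+n) * Real.exp (-x^2 + c.re*x + d.re) := by
    rw [hnorm, pow_add]
    gcongr
  have step2 : K^(m+n) ≤ Real.exp ((m+n)*K) := by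
    calc K^(m+n) ≤ (Real.exp K)^(m+n) := by gcongr
    _ = Real.exp ((m+n)*K) := by rw [← Real.exp_nat_mul]; push_cast; ring_nf
  calc ‖Pfun a b c d m n x‖ ≤ K^(m+n) * Real.exp (-x^2 + c.re*x + d.re) := step1
    _ ≤ Real.exp ((m+n)*K) * Real.exp (-x^2 + c.re*x + d.re) := by
        gcongr
    _ = Real.exp ((m+n)*(‖a‖+‖b‖) + d.re) * (Real.exp ((m+n)*|x|) * Real.exp (-x^2 + c.re*x)) := by
        rw [← Real.exp_add, ← Real.exp_add, ← Real.exp_add, hK]; ring_nf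
    _ ≤ Real.exp ((m+n)*(‖a‖+‖b‖) + d.re) *
        (gauss (c.re + (m+n)) x + gauss (c.re - (m+n)) x) := by
        gcongr
        calc Real.exp ((m+n)*|x|) * Real.exp (-x^2 + c.re*x)
            ≤ (Real.exp ((m+n)*x) + Real.exp ((m+n)*(-x))) * Real.exp (-x^2 + c.re*x) := by
              gcongr; exact exp_abs_le _ _
          _ = gauss (c.re + (m+n)) x + gauss (c.re - (m+n)) x := by
              rw [add_mul, gauss, gauss, ← Real.exp_add, ← Real.exp_add]; ring_nf

lemma Pfun_continuous (a b c d : ℂ) (m n : ℕ) : Continuous (Pfun a b c d m n) := by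
  unfold Pfun; fun_prop

lemma Pfun_integrable (a b c d : ℂ) (m n : ℕ) : Integrable (Pfun a b c d m n) := by
  apply Integrable.mono'
    ((((gauss_integrable _).add (gauss_integrable _))).const_mul
      (Real.exp ((m+n)*(‖a‖+‖b‖) + d.re)))
    (Pfun_continuous a b c d m n).aestronglyMeasurable
  exact Filter.Eventually.of_forall (Pfun_norm_bound a b c d m n)

lemma Pfun_tendsto_atTop (a b c d : ℂ) (m n : ℕ) :
    Tendsto (Pfun a b c d m n) atTop (nhds 0) := by
  apply squeeze_zero_norm (Pfun_norm_bound a b c d m n)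
  have := ((gauss_tendsto_atTop (c.re + (m+n))).add (gauss_tendsto_atTop (c.re - (m+n)))).const_mul
    (Real.exp ((m+n)*(‖a‖+‖b‖) + d.re))
  simpa using this

lemma Pfun_tendsto_atBot (a b c d : ℂ) (m n : ℕ) :
    Tendsto (Pfun a b c d m n) atBot (nhds 0) := by
  apply squeeze_zero_norm (Pfun_norm_bound a b c d m n)
  have := ((gauss_tendsto_atBot (c.re + (m+n))).add (gauss_tendsto_atBot (c.re - (m+n)))).const_mul
    (Real.exp ((m+n)*(‖a‖+‖b‖) + d.re))
  simpa using this

lemma Pfun_hasDerivAt (a b c d : ℂ) (m n : ℕ) (x : ℝ) :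
    HasDerivAt (Pfun a b c d m n)
      ((m:ℂ) * Pfun a b c d (m-1) n x + (n:ℂ) * Pfun a b c d m (n-1) x
        + (c - 2*(x:ℂ)) * Pfun a b c d m n x) x := by
  have h1 : ∀ z : ℂ, HasDerivAt (fun z : ℂ => (z+a)^m) ((m:ℂ)*(z+a)^(m-1)) z := by
    intro z
    simpa using ((hasDerivAt_id z).add_const a).fun_pow m
  have h2 : ∀ z : ℂ, HasDerivAt (fun z : ℂ => (z+b)^n) ((n:ℂ)*(z+b)^(n-1)) z := by
    intro z
    simpa using ((hasDerivAt_id z).add_const b).fun_pow n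
  have h3 : ∀ z : ℂ, HasDerivAt (fun z : ℂ => Complex.exp (-z^2 + c*z + d))
      ((-(2*z) + c) * Complex.exp (-z^2 + c*z + d)) z := by
    intro z
    have := (((hasDerivAt_pow 2 z).neg.add ((hasDerivAt_id z).const_mul c)).add_const d).cexp
    simpa [pow_one, mul_comm] using this
  have H : ∀ z : ℂ, HasDerivAt (fun z : ℂ => (z+a)^m * (z+b)^n * Complex.exp (-z^2 + c*z + d))
      ((m:ℂ)*(z+a)^(m-1) * ((z+b)^n * Complex.exp (-z^2+c*z+d))
        + (n:ℂ)*(z+b)^(n-1) * ((z+a)^m * Complex.exp (-z^2+c*z+d))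
        + (-(2*z)+c) * ((z+a)^m * (z+b)^n * Complex.exp (-z^2+c*z+d))) z := by
    intro z
    have := ((h1 z).fun_mul (h2 z)).fun_mul (h3 z)
    convert this using 1
    rfl
    rfl
    ring
  have := (H (x:ℂ)).comp_ofReal
  convert this using 1
  rfl
  simp only [Pfun]
  ring

noncomputable def Pderiv (a b c d : ℂ) (m n : ℕ) (x : ℝ) : ℂ :=
  (m:ℂ) * Pfun a b c d (m-1) n x + (n:ℂ) * Pfun a b c d m (n-1) x
    + (c - 2*(x:ℂ)) * Pfun a b c d m n x

lemma Pderiv_integrable (a b c d : ℂ) (m n : ℕ) : Integrable (Pderiv a b c d m n) := by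
  have heq : Pderiv a b c d m n = fun x =>
      (m:ℂ) * Pfun a b c d (m-1) n x + (n:ℂ) * Pfun a b c d m (n-1) x
        + (c + 2*a) * Pfun a b c d m n x - 2 * Pfun a b c d (m+1) n x := by
    funext x
    simp only [Pderiv, Pfun, pow_succ]
    ring
  rw [heq]
  exact ((((Pfun_integrable a b c d (m-1) n).const_mul _).add
    ((Pfun_integrable a b c d m (n-1)).const_mul _)).add
    ((Pfun_integrable a b c d m n).const_mul _)).sub
    ((Pfun_integrable a b c d (m+1) n).const_mul _)

lemma integral_Pderiv (a b c d : ℂ) (m n : ℕ) : ∫ x : ℝ, Pderiv a b c d m n x = 0 := by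
  have hint := Pderiv_integrable a b c d m n
  have hIoi : ∫ x in Ioi (0:ℝ), Pderiv a b c d m n x = 0 - Pfun a b c d m n 0 :=
    integral_Ioi_of_hasDerivAt_of_tendsto' (fun x _ => Pfun_hasDerivAt a b c d m n x)
      hint.integrableOn (Pfun_tendsto_atTop a b c d m n)
  have hIic : ∫ x in Iic (0:ℝ), Pderiv a b c d m n x = Pfun a b c d m n 0 - 0 :=
    integral_Iic_of_hasDerivAt_of_tendsto' (fun x _ => Pfun_hasDerivAt a b c d m n x)
      hint.integrableOn (Pfun_tendsto_atBot a b c d m n)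
  rw [← intervalIntegral.integral_Iic_add_Ioi (b:=(0:ℝ)) hint.integrableOn hint.integrableOn, hIoi, hIic]
  ring

noncomputable def g2 (m n : ℕ) (z₁ z₂ : ℂ) (r s : ℝ) : ℂ :=
  ((r:ℂ) - s*I)^m * ((r:ℂ) + s*I)^n *
    Complex.exp (-(((r:ℂ) + s*I) * ((r:ℂ) - s*I)) + I*z₁*((r:ℂ)+s*I) + I*z₂*((r:ℂ)-s*I))

lemma g2_eq_P_r (m n : ℕ) (z₁ z₂ : ℂ) (r s : ℝ) :
    g2 m n z₁ z₂ r s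
      = Pfun (-(s:ℂ)*I) ((s:ℂ)*I) (I*(z₁+z₂)) (-(s:ℂ)^2 + (z₂-z₁)*(s:ℂ)) m n r := by
  simp only [g2, Pfun]
  have h1 : ((r:ℂ) - s*I) = ((r:ℂ) + -(s:ℂ)*I) := by ring
  have h2 : (-(((r:ℂ) + s*I) * ((r:ℂ) - s*I)) + I*z₁*((r:ℂ)+s*I) + I*z₂*((r:ℂ)-s*I))
      = (-(r:ℂ)^2 + (I*(z₁+z₂))*(r:ℂ) + (-(s:ℂ)^2 + (z₂-z₁)*(s:ℂ))) := by
    linear_combination ((s:ℂ)^2 + z₁*(s:ℂ) - z₂*(s:ℂ)) * Complex.I_sq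
  rw [h2, h1]

lemma g2_eq_P_s (m n : ℕ) (z₁ z₂ : ℂ) (r s : ℝ) :
    g2 m n z₁ z₂ r s
      = (-I)^m * I^n * Pfun ((r:ℂ)*I) (-(r:ℂ)*I) (z₂-z₁) (-(r:ℂ)^2 + I*(z₁+z₂)*(r:ℂ)) m n s := by
  simp only [g2, Pfun]
  have h1 : ((r:ℂ) - s*I)^m = (-I)^m * ((s:ℂ) + (r:ℂ)*I)^m := by
    rw [← mul_pow]; congr 1; linear_combination (r:ℂ) * Complex.I_sq
  have h2 : ((r:ℂ) + s*I)^n = I^n * ((s:ℂ) + -(r:ℂ)*I)^n := by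
    rw [← mul_pow]; congr 1; linear_combination (r:ℂ) * Complex.I_sq
  have h3 : (-(((r:ℂ) + s*I) * ((r:ℂ) - s*I)) + I*z₁*((r:ℂ)+s*I) + I*z₂*((r:ℂ)-s*I))
      = (-(s:ℂ)^2 + (z₂-z₁)*(s:ℂ) + (-(r:ℂ)^2 + I*(z₁+z₂)*(r:ℂ))) := by
    linear_combination ((s:ℂ)^2 + z₁*(s:ℂ) - z₂*(s:ℂ)) * Complex.I_sq
  rw [h1, h2, h3]
  ring

lemma g2_continuous (m n : ℕ) (z₁ z₂ : ℂ) :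
    Continuous (fun p : ℝ × ℝ => g2 m n z₁ z₂ p.1 p.2) := by
  unfold g2; fun_prop

lemma exp_abs_mul_gauss_le (M α t : ℝ) :
    Real.exp (M*|t|) * Real.exp (-t^2 + α*t) ≤ gauss (α+M) t + gauss (α-M) t := by
  calc Real.exp (M*|t|) * Real.exp (-t^2 + α*t)
      ≤ (Real.exp (M*t) + Real.exp (M*(-t))) * Real.exp (-t^2 + α*t) := by
        gcongr
        exact exp_abs_le M t
    _ = gauss (α+M) t + gauss (α-M) t := by
        rw [gauss, gauss, add_mul, ← Real.exp_add, ← Real.exp_add]; ring_nf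

lemma g2_norm_bound (m n : ℕ) (z₁ z₂ : ℂ) (r s : ℝ) :
    ‖g2 m n z₁ z₂ r s‖ ≤
      (gauss ((I*(z₁+z₂)).re + ((m:ℝ)+n)) r + gauss ((I*(z₁+z₂)).re - ((m:ℝ)+n)) r) *
      (gauss ((z₂-z₁).re + ((m:ℝ)+n)) s + gauss ((z₂-z₁).re - ((m:ℝ)+n)) s) := by
  set α := (I*(z₁+z₂)).re with hα
  set β := (z₂-z₁).re with hβ
  have hre : (-(((r:ℂ) + s*I) * ((r:ℂ) - s*I)) + I*z₁*((r:ℂ)+s*I) + I*z₂*((r:ℂ)-s*I)).re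
      = (-r^2 + α*r) + (-s^2 + β*s) := by
    rw [show (-(((r:ℂ) + s*I) * ((r:ℂ) - s*I)) + I*z₁*((r:ℂ)+s*I) + I*z₂*((r:ℂ)-s*I))
        = -(r:ℂ)^2 + (I*(z₁+z₂))*(r:ℂ) + (-(s:ℂ)^2 + (z₂-z₁)*(s:ℂ)) from by
      linear_combination ((s:ℂ)^2 + z₁*(s:ℂ) - z₂*(s:ℂ)) * Complex.I_sq]
    rw [hα, hβ]
    simp [Complex.add_re, Complex.neg_re, Complex.mul_re, Complex.add_im, Complex.sub_re,
      ← Complex.ofReal_pow]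
  have hnorm : ‖g2 m n z₁ z₂ r s‖ = ‖(r:ℂ)-s*I‖^m * ‖(r:ℂ)+s*I‖^n *
      (Real.exp (-r^2+α*r) * Real.exp (-s^2+β*s)) := by
    rw [g2, norm_mul, norm_mul, norm_pow, norm_pow, Complex.norm_exp, hre, Real.exp_add]
  have h1 : ‖(r:ℂ) - s*I‖ ≤ |r| + |s| := by
    calc ‖(r:ℂ) - s*I‖ ≤ ‖(r:ℂ)‖ + ‖(s:ℂ)*I‖ := norm_sub_le _ _
    _ = |r| + |s| := by simp [Complex.norm_real, Real.norm_eq_abs]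
  have h2 : ‖(r:ℂ) + s*I‖ ≤ |r| + |s| := by
    calc ‖(r:ℂ) + s*I‖ ≤ ‖(r:ℂ)‖ + ‖(s:ℂ)*I‖ := norm_add_le _ _
    _ = |r| + |s| := by simp [Complex.norm_real, Real.norm_eq_abs]
  have hexp : |r| + |s| ≤ Real.exp (|r| + |s|) := by
    nlinarith [Real.add_one_le_exp (|r| + |s|)]
  calc ‖g2 m n z₁ z₂ r s‖
      = ‖(r:ℂ)-s*I‖^m * ‖(r:ℂ)+s*I‖^n * (Real.exp (-r^2+α*r) * Real.exp (-s^2+β*s)) := hnorm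
    _ ≤ (|r|+|s|)^m * (|r|+|s|)^n * (Real.exp (-r^2+α*r) * Real.exp (-s^2+β*s)) := by
        gcongr
    _ = (|r|+|s|)^(m+n) * (Real.exp (-r^2+α*r) * Real.exp (-s^2+β*s)) := by rw [← pow_add]
    _ ≤ (Real.exp (|r|+|s|))^(m+n) * (Real.exp (-r^2+α*r) * Real.exp (-s^2+β*s)) := by
        gcongr
    _ = (Real.exp (((m:ℝ)+n)*|r|) * Real.exp (-r^2+α*r)) *
        (Real.exp (((m:ℝ)+n)*|s|) * Real.exp (-s^2+β*s)) := by
        simp only [← Real.exp_nat_mul, ← Real.exp_add]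
        congr 1
        push_cast
        ring
    _ ≤ (gauss (α + ((m:ℝ)+n)) r + gauss (α - ((m:ℝ)+n)) r) *
        (gauss (β + ((m:ℝ)+n)) s + gauss (β - ((m:ℝ)+n)) s) := by
        apply mul_le_mul (exp_abs_mul_gauss_le _ _ _) (exp_abs_mul_gauss_le _ _ _)
        · positivity
        · have := Real.exp_pos; unfold gauss; positivity

lemma g2_integrable (m n : ℕ) (z₁ z₂ : ℂ) :
    Integrable (fun p : ℝ × ℝ => g2 m n z₁ z₂ p.1 p.2) := by
  apply Integrable.mono'
    (Integrable.mul_prod ((gauss_integrable _).add (gauss_integrable _))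
      ((gauss_integrable _).add (gauss_integrable _)))
    (g2_continuous m n z₁ z₂).aestronglyMeasurable
  exact Filter.Eventually.of_forall (fun p => g2_norm_bound m n z₁ z₂ p.1 p.2)

lemma g2_succ_n (m n : ℕ) (z₁ z₂ : ℂ) (r s : ℝ) :
    g2 m (n+1) z₁ z₂ r s = ((r:ℂ)+s*I) * g2 m n z₁ z₂ r s := by
  simp only [g2, pow_succ]; ring

lemma g2_succ_m (m n : ℕ) (z₁ z₂ : ℂ) (r s : ℝ) :
    g2 (m+1) n z₁ z₂ r s = ((r:ℂ)-s*I) * g2 m n z₁ z₂ r s := by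
  simp only [g2, pow_succ]; ring

lemma g2_fst_integrable (m n : ℕ) (z₁ z₂ : ℂ) :
    Integrable (fun p : ℝ × ℝ => (p.1:ℂ) * g2 m n z₁ z₂ p.1 p.2) := by
  apply Integrable.mono' (g2_integrable (m+1) n z₁ z₂).norm
    (((Complex.continuous_ofReal.comp continuous_fst).fun_mul (g2_continuous m n z₁ z₂))).aestronglyMeasurable
  refine Filter.Eventually.of_forall (fun p => ?_)
  simp only [Function.comp_apply]
  rw [norm_mul, Complex.norm_real, Real.norm_eq_abs, g2_succ_m, norm_mul]
  gcongr
  calc |p.1| = |((p.1:ℂ) - p.2*I).re| := by simp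
  _ ≤ ‖(p.1:ℂ) - p.2*I‖ := Complex.abs_re_le_norm _

lemma g2_snd_integrable (m n : ℕ) (z₁ z₂ : ℂ) :
    Integrable (fun p : ℝ × ℝ => (p.2:ℂ) * g2 m n z₁ z₂ p.1 p.2) := by
  apply Integrable.mono' (g2_integrable m (n+1) z₁ z₂).norm
    (((Complex.continuous_ofReal.comp continuous_snd).fun_mul (g2_continuous m n z₁ z₂))).aestronglyMeasurable
  refine Filter.Eventually.of_forall (fun p => ?_)
  simp only [Function.comp_apply]
  rw [norm_mul, Complex.norm_real, Real.norm_eq_abs, g2_succ_n, norm_mul]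
  gcongr
  calc |p.2| = |((p.1:ℂ) + p.2*I).im| := by simp
  _ ≤ ‖(p.1:ℂ) + p.2*I‖ := Complex.abs_im_le_norm _

lemma integral_Pderiv' (a b c d : ℂ) (m n : ℕ) :
    ∫ x : ℝ, ((m:ℂ) * Pfun a b c d (m-1) n x + (n:ℂ) * Pfun a b c d m (n-1) x
      + (c - 2*(x:ℂ)) * Pfun a b c d m n x) = 0 := integral_Pderiv a b c d m n

lemma hr_integrable (m n : ℕ) (z₁ z₂ : ℂ) :
    Integrable (fun p : ℝ × ℝ => ((m:ℂ) * g2 (m-1) n z₁ z₂ p.1 p.2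
      + (n:ℂ) * g2 m (n-1) z₁ z₂ p.1 p.2
      + (I*(z₁+z₂) - 2*(p.1:ℂ)) * g2 m n z₁ z₂ p.1 p.2)) := by
  have heq : (fun p : ℝ × ℝ => ((m:ℂ) * g2 (m-1) n z₁ z₂ p.1 p.2
      + (n:ℂ) * g2 m (n-1) z₁ z₂ p.1 p.2
      + (I*(z₁+z₂) - 2*(p.1:ℂ)) * g2 m n z₁ z₂ p.1 p.2))
      = fun p : ℝ × ℝ => ((m:ℂ) * g2 (m-1) n z₁ z₂ p.1 p.2
      + (n:ℂ) * g2 m (n-1) z₁ z₂ p.1 p.2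
      + (I*(z₁+z₂)) * g2 m n z₁ z₂ p.1 p.2
      - 2 * ((p.1:ℂ) * g2 m n z₁ z₂ p.1 p.2)) := by
    funext p; ring
  rw [heq]
  exact ((((g2_integrable (m-1) n z₁ z₂).const_mul _).add
    ((g2_integrable m (n-1) z₁ z₂).const_mul _)).add
    ((g2_integrable m n z₁ z₂).const_mul _)).sub
    ((g2_fst_integrable m n z₁ z₂).const_mul _)

lemma hs_integrable (m n : ℕ) (z₁ z₂ : ℂ) :
    Integrable (fun p : ℝ × ℝ => ((-I)*(m:ℂ) * g2 (m-1) n z₁ z₂ p.1 p.2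
      + I*(n:ℂ) * g2 m (n-1) z₁ z₂ p.1 p.2
      + ((z₂-z₁) - 2*(p.2:ℂ)) * g2 m n z₁ z₂ p.1 p.2)) := by
  have heq : (fun p : ℝ × ℝ => ((-I)*(m:ℂ) * g2 (m-1) n z₁ z₂ p.1 p.2
      + I*(n:ℂ) * g2 m (n-1) z₁ z₂ p.1 p.2
      + ((z₂-z₁) - 2*(p.2:ℂ)) * g2 m n z₁ z₂ p.1 p.2))
      = fun p : ℝ × ℝ => (((-I)*(m:ℂ)) * g2 (m-1) n z₁ z₂ p.1 p.2
      + (I*(n:ℂ)) * g2 m (n-1) z₁ z₂ p.1 p.2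
      + (z₂-z₁) * g2 m n z₁ z₂ p.1 p.2
      - 2 * ((p.2:ℂ) * g2 m n z₁ z₂ p.1 p.2)) := by
    funext p; ring
  rw [heq]
  exact ((((g2_integrable (m-1) n z₁ z₂).const_mul _).add
    ((g2_integrable m (n-1) z₁ z₂).const_mul _)).add
    ((g2_integrable m n z₁ z₂).const_mul _)).sub
    ((g2_snd_integrable m n z₁ z₂).const_mul _)

lemma hr_zero (m n : ℕ) (z₁ z₂ : ℂ) :
    ∫ p : ℝ × ℝ, ((m:ℂ) * g2 (m-1) n z₁ z₂ p.1 p.2 + (n:ℂ) * g2 m (n-1) z₁ z₂ p.1 p.2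
      + (I*(z₁+z₂) - 2*(p.1:ℂ)) * g2 m n z₁ z₂ p.1 p.2) = 0 := by
  have hint := hr_integrable m n z₁ z₂
  rw [MeasureTheory.Measure.volume_eq_prod] at hint ⊢
  rw [MeasureTheory.integral_prod_symm _ hint]
  have h : ∀ s : ℝ, (∫ r : ℝ, ((m:ℂ) * g2 (m-1) n z₁ z₂ r s + (n:ℂ) * g2 m (n-1) z₁ z₂ r s
      + (I*(z₁+z₂) - 2*(r:ℂ)) * g2 m n z₁ z₂ r s)) = 0 := by
    intro s
    simp only [g2_eq_P_r]
    exact integral_Pderiv' (-(s:ℂ)*I) ((s:ℂ)*I) (I*(z₁+z₂)) (-(s:ℂ)^2 + (z₂-z₁)*(s:ℂ)) m n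
  simp only [h, integral_zero]

lemma coeff_negI (m : ℕ) : (-I) * (m:ℂ) * (-I)^(m-1) = (m:ℂ) * (-I)^m := by
  cases m with
  | zero => simp
  | succ k => rw [pow_succ]; push_cast; ring

lemma coeff_I (n : ℕ) : I * (n:ℂ) * I^(n-1) = (n:ℂ) * I^n := by
  cases n with
  | zero => simp
  | succ k => rw [pow_succ]; push_cast; ring

lemma hs_zero (m n : ℕ) (z₁ z₂ : ℂ) :
    ∫ p : ℝ × ℝ, ((-I)*(m:ℂ) * g2 (m-1) n z₁ z₂ p.1 p.2 + I*(n:ℂ) * g2 m (n-1) z₁ z₂ p.1 p.2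
      + ((z₂-z₁) - 2*(p.2:ℂ)) * g2 m n z₁ z₂ p.1 p.2) = 0 := by
  have hint := hs_integrable m n z₁ z₂
  rw [MeasureTheory.Measure.volume_eq_prod] at hint ⊢
  rw [MeasureTheory.integral_prod _ hint]
  have h : ∀ r : ℝ, (∫ s : ℝ, ((-I)*(m:ℂ) * g2 (m-1) n z₁ z₂ r s + I*(n:ℂ) * g2 m (n-1) z₁ z₂ r s
      + ((z₂-z₁) - 2*(s:ℂ)) * g2 m n z₁ z₂ r s)) = 0 := by
    intro r
    have key := integral_Pderiv' ((r:ℂ)*I) (-(r:ℂ)*I) (z₂-z₁) (-(r:ℂ)^2 + I*(z₁+z₂)*(r:ℂ)) m n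
    have heq : ∀ s : ℝ, ((-I)*(m:ℂ) * g2 (m-1) n z₁ z₂ r s + I*(n:ℂ) * g2 m (n-1) z₁ z₂ r s
        + ((z₂-z₁) - 2*(s:ℂ)) * g2 m n z₁ z₂ r s)
        = ((-I)^m * I^n) * ((m:ℂ) * Pfun ((r:ℂ)*I) (-(r:ℂ)*I) (z₂-z₁) (-(r:ℂ)^2 + I*(z₁+z₂)*(r:ℂ)) (m-1) n s
          + (n:ℂ) * Pfun ((r:ℂ)*I) (-(r:ℂ)*I) (z₂-z₁) (-(r:ℂ)^2 + I*(z₁+z₂)*(r:ℂ)) m (n-1) s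
          + ((z₂-z₁) - 2*(s:ℂ)) * Pfun ((r:ℂ)*I) (-(r:ℂ)*I) (z₂-z₁) (-(r:ℂ)^2 + I*(z₁+z₂)*(r:ℂ)) m n s) := by
      intro s
      simp only [g2_eq_P_s]
      have h1 := coeff_negI m
      have h2 := coeff_I n
      set P₁ := Pfun ((r:ℂ)*I) (-(r:ℂ)*I) (z₂-z₁) (-(r:ℂ)^2 + I*(z₁+z₂)*(r:ℂ)) (m-1) n s
      set P₂ := Pfun ((r:ℂ)*I) (-(r:ℂ)*I) (z₂-z₁) (-(r:ℂ)^2 + I*(z₁+z₂)*(r:ℂ)) m (n-1) s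
      set P₃ := Pfun ((r:ℂ)*I) (-(r:ℂ)*I) (z₂-z₁) (-(r:ℂ)^2 + I*(z₁+z₂)*(r:ℂ)) m n s
      linear_combination (I^n*P₁)*h1 + ((-I)^m*P₂)*h2
    simp only [heq]
    rw [MeasureTheory.integral_const_mul, key, mul_zero]
  simp only [h, integral_zero]

noncomputable def J (m n : ℕ) (z₁ z₂ : ℂ) : ℂ := ∫ p : ℝ × ℝ, g2 m n z₁ z₂ p.1 p.2

lemma recB (m n : ℕ) (z₁ z₂ : ℂ) :
    J m (n+1) z₁ z₂ = (m:ℂ) * J (m-1) n z₁ z₂ + I*z₂ * J m n z₁ z₂ := by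
  have h1 := hr_zero m n z₁ z₂
  have h2 := hs_zero m n z₁ z₂
  have hcomb : ∫ p : ℝ × ℝ, (((m:ℂ) * g2 (m-1) n z₁ z₂ p.1 p.2
        + (n:ℂ) * g2 m (n-1) z₁ z₂ p.1 p.2
        + (I*(z₁+z₂) - 2*(p.1:ℂ)) * g2 m n z₁ z₂ p.1 p.2)
      + I * ((-I)*(m:ℂ) * g2 (m-1) n z₁ z₂ p.1 p.2 + I*(n:ℂ) * g2 m (n-1) z₁ z₂ p.1 p.2
        + ((z₂-z₁) - 2*(p.2:ℂ)) * g2 m n z₁ z₂ p.1 p.2)) = 0 := by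
    rw [MeasureTheory.integral_add (hr_integrable m n z₁ z₂)
      ((hs_integrable m n z₁ z₂).const_mul I), MeasureTheory.integral_const_mul, h1, h2]
    simp
  have heq : ∀ p : ℝ × ℝ, (((m:ℂ) * g2 (m-1) n z₁ z₂ p.1 p.2
        + (n:ℂ) * g2 m (n-1) z₁ z₂ p.1 p.2
        + (I*(z₁+z₂) - 2*(p.1:ℂ)) * g2 m n z₁ z₂ p.1 p.2)
      + I * ((-I)*(m:ℂ) * g2 (m-1) n z₁ z₂ p.1 p.2 + I*(n:ℂ) * g2 m (n-1) z₁ z₂ p.1 p.2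
        + ((z₂-z₁) - 2*(p.2:ℂ)) * g2 m n z₁ z₂ p.1 p.2))
      = 2*(m:ℂ) * g2 (m-1) n z₁ z₂ p.1 p.2 + 2*(I*z₂) * g2 m n z₁ z₂ p.1 p.2
        - 2 * g2 m (n+1) z₁ z₂ p.1 p.2 := by
    intro p
    rw [g2_succ_n]
    linear_combination ((n:ℂ) * g2 m (n-1) z₁ z₂ p.1 p.2
      - (m:ℂ) * g2 (m-1) n z₁ z₂ p.1 p.2) * Complex.I_sq
  simp only [heq] at hcomb
  have hA : Integrable (fun p : ℝ × ℝ => 2*(m:ℂ) * g2 (m-1) n z₁ z₂ p.1 p.2) :=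
    (g2_integrable (m-1) n z₁ z₂).const_mul _
  have hB : Integrable (fun p : ℝ × ℝ => 2*(I*z₂) * g2 m n z₁ z₂ p.1 p.2) :=
    (g2_integrable m n z₁ z₂).const_mul _
  have hC : Integrable (fun p : ℝ × ℝ => 2 * g2 m (n+1) z₁ z₂ p.1 p.2) :=
    (g2_integrable m (n+1) z₁ z₂).const_mul _
  have hAB : Integrable (fun p : ℝ × ℝ => 2*(m:ℂ) * g2 (m-1) n z₁ z₂ p.1 p.2
      + 2*(I*z₂) * g2 m n z₁ z₂ p.1 p.2) := hA.add hB
  rw [MeasureTheory.integral_sub hAB hC, MeasureTheory.integral_add hA hB,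
    MeasureTheory.integral_const_mul, MeasureTheory.integral_const_mul,
    MeasureTheory.integral_const_mul] at hcomb
  unfold J
  linear_combination (-1/2 : ℂ) * hcomb

lemma recA (m n : ℕ) (z₁ z₂ : ℂ) :
    J (m+1) n z₁ z₂ = (n:ℂ) * J m (n-1) z₁ z₂ + I*z₁ * J m n z₁ z₂ := by
  have h1 := hr_zero m n z₁ z₂
  have h2 := hs_zero m n z₁ z₂
  have hcomb : ∫ p : ℝ × ℝ, (((m:ℂ) * g2 (m-1) n z₁ z₂ p.1 p.2
        + (n:ℂ) * g2 m (n-1) z₁ z₂ p.1 p.2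
        + (I*(z₁+z₂) - 2*(p.1:ℂ)) * g2 m n z₁ z₂ p.1 p.2)
      - I * ((-I)*(m:ℂ) * g2 (m-1) n z₁ z₂ p.1 p.2 + I*(n:ℂ) * g2 m (n-1) z₁ z₂ p.1 p.2
        + ((z₂-z₁) - 2*(p.2:ℂ)) * g2 m n z₁ z₂ p.1 p.2)) = 0 := by
    rw [MeasureTheory.integral_sub (hr_integrable m n z₁ z₂)
      ((hs_integrable m n z₁ z₂).const_mul I), MeasureTheory.integral_const_mul, h1, h2]
    simp
  have heq : ∀ p : ℝ × ℝ, (((m:ℂ) * g2 (m-1) n z₁ z₂ p.1 p.2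
        + (n:ℂ) * g2 m (n-1) z₁ z₂ p.1 p.2
        + (I*(z₁+z₂) - 2*(p.1:ℂ)) * g2 m n z₁ z₂ p.1 p.2)
      - I * ((-I)*(m:ℂ) * g2 (m-1) n z₁ z₂ p.1 p.2 + I*(n:ℂ) * g2 m (n-1) z₁ z₂ p.1 p.2
        + ((z₂-z₁) - 2*(p.2:ℂ)) * g2 m n z₁ z₂ p.1 p.2))
      = 2*(n:ℂ) * g2 m (n-1) z₁ z₂ p.1 p.2 + 2*(I*z₁) * g2 m n z₁ z₂ p.1 p.2
        - 2 * g2 (m+1) n z₁ z₂ p.1 p.2 := by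
    intro p
    rw [g2_succ_m]
    linear_combination ((m:ℂ) * g2 (m-1) n z₁ z₂ p.1 p.2
      - (n:ℂ) * g2 m (n-1) z₁ z₂ p.1 p.2) * Complex.I_sq
  simp only [heq] at hcomb
  have hA : Integrable (fun p : ℝ × ℝ => 2*(n:ℂ) * g2 m (n-1) z₁ z₂ p.1 p.2) :=
    (g2_integrable m (n-1) z₁ z₂).const_mul _
  have hB : Integrable (fun p : ℝ × ℝ => 2*(I*z₁) * g2 m n z₁ z₂ p.1 p.2) :=
    (g2_integrable m n z₁ z₂).const_mul _
  have hC : Integrable (fun p : ℝ × ℝ => 2 * g2 (m+1) n z₁ z₂ p.1 p.2) :=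
    (g2_integrable (m+1) n z₁ z₂).const_mul _
  have hAB : Integrable (fun p : ℝ × ℝ => 2*(n:ℂ) * g2 m (n-1) z₁ z₂ p.1 p.2
      + 2*(I*z₁) * g2 m n z₁ z₂ p.1 p.2) := hA.add hB
  rw [MeasureTheory.integral_sub hAB hC, MeasureTheory.integral_add hA hB,
    MeasureTheory.integral_const_mul, MeasureTheory.integral_const_mul,
    MeasureTheory.integral_const_mul] at hcomb
  unfold J
  linear_combination (-1/2 : ℂ) * hcomb

lemma J_base (z₁ z₂ : ℂ) : J 0 0 z₁ z₂ = (Real.pi : ℂ) * Complex.exp (-(z₁*z₂)) := by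
  have hfact : ∀ r s : ℝ, g2 0 0 z₁ z₂ r s
      = Complex.exp ((-1)*(r:ℂ)^2 + (I*(z₁+z₂))*(r:ℂ) + 0)
        * Complex.exp ((-1)*(s:ℂ)^2 + (z₂-z₁)*(s:ℂ) + 0) := by
    intro r s
    rw [g2, ← Complex.exp_add]
    simp only [pow_zero, one_mul]
    congr 1
    linear_combination ((s:ℂ)^2 + z₁*(s:ℂ) - z₂*(s:ℂ)) * Complex.I_sq
  unfold J
  simp only [hfact]
  rw [MeasureTheory.Measure.volume_eq_prod, MeasureTheory.integral_prod_mul (fun r : ℝ => Complex.exp ((-1)*(r:ℂ)^2 + (I*(z₁+z₂))*(r:ℂ) + 0)) (fun s : ℝ => Complex.exp ((-1)*(s:ℂ)^2 + (z₂-z₁)*(s:ℂ) + 0)),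
    integral_cexp_quadratic (by norm_num : ((-1:ℂ)).re < 0),
    integral_cexp_quadratic (by norm_num : ((-1:ℂ)).re < 0)]
  have hpi : ((Real.pi : ℂ) / -(-1)) ^ (1/2 : ℂ) * ((Real.pi : ℂ) / -(-1)) ^ (1/2 : ℂ)
      = (Real.pi : ℂ) := by
    rw [← Complex.cpow_add _ _ (by simp [Complex.ofReal_ne_zero, Real.pi_ne_zero])]
    norm_num
  rw [mul_mul_mul_comm, hpi, ← Complex.exp_add]
  congr 2
  linear_combination ((z₁+z₂)^2/4) * Complex.I_sq

lemma H2_eq_sum (m n N : ℕ) (h : min m n < N) (z₁ z₂ : ℂ) :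
    H2 m n z₁ z₂ = ∑ k ∈ Finset.range N,
      (-1:ℂ)^k * (Nat.factorial k) * (Nat.choose m k) * (Nat.choose n k)
        * z₁^(m-k) * z₂^(n-k) := by
  rw [H2]
  apply Finset.sum_subset
  · intro k hk
    simp only [Finset.mem_range] at hk ⊢
    omega
  · intro k _ hk
    simp only [Finset.mem_range, not_lt] at hk
    have h' : m < k ∨ n < k := by omega
    rcases h' with h' | h'
    · simp [Nat.choose_eq_zero_of_lt h']
    · simp [Nat.choose_eq_zero_of_lt h']

lemma H2_n_zero (m : ℕ) (z₁ z₂ : ℂ) : H2 m 0 z₁ z₂ = z₁^m := by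
  simp [H2]

lemma H2_m_zero (n : ℕ) (z₁ z₂ : ℂ) : H2 0 n z₁ z₂ = z₂^n := by
  simp [H2]

lemma H2_zero_zero (z₁ z₂ : ℂ) : H2 0 0 z₁ z₂ = 1 := by
  simp [H2]

lemma Hpt (m n k : ℕ) (z₁ z₂ : ℂ) :
    (-1:ℂ)^(k+1) * (Nat.factorial (k+1)) * (Nat.choose (m+1) (k+1)) * (Nat.choose (n+1) (k+1))
        * z₁^(m+1-(k+1)) * z₂^(n+1-(k+1))
    = z₂ * ((-1:ℂ)^(k+1) * (Nat.factorial (k+1)) * (Nat.choose (m+1) (k+1)) * (Nat.choose n (k+1))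
        * z₁^(m+1-(k+1)) * z₂^(n-(k+1)))
      - ((m:ℂ)+1) * ((-1:ℂ)^k * (Nat.factorial k) * (Nat.choose m k) * (Nat.choose n k)
        * z₁^(m-k) * z₂^(n-k)) := by
  have hsub : m+1-(k+1) = m-k := by omega
  have hsub2 : n+1-(k+1) = n-k := by omega
  have hmc : ((k:ℂ)+1) * (Nat.choose (m+1) (k+1)) = ((m:ℂ)+1) * (Nat.choose m k) := by
    have h := Nat.add_one_mul_choose_eq m k
    have h2 : ((Nat.succ m * Nat.choose m k : ℕ) : ℂ) = ((Nat.choose (m+1) (k+1) * (k+1) : ℕ) : ℂ) := by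
      rw [h]
    push_cast at h2
    linear_combination -h2
  rw [hsub, hsub2, Nat.choose_succ_succ n k]
  push_cast [Nat.factorial_succ]
  by_cases hkn : k+1 ≤ n
  · have hz : z₂^(n-k) = z₂ * z₂^(n-(k+1)) := by
      rw [← pow_succ']
      congr 1
      omega
    rw [hz]
    linear_combination (-((-1:ℂ)^k * (Nat.factorial k) * (Nat.choose n k) * z₁^(m-k)
      * (z₂ * z₂^(n-(k+1))))) * hmc
  · have h1 : Nat.choose n (k+1) = 0 := Nat.choose_eq_zero_of_lt (by omega)
    rw [h1]
    push_cast
    linear_combination (-((-1:ℂ)^k * (Nat.factorial k) * (Nat.choose n k) * z₁^(m-k)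
      * z₂^(n-k))) * hmc

lemma HrecB (m n : ℕ) (z₁ z₂ : ℂ) :
    H2 m (n+1) z₁ z₂ = z₂ * H2 m n z₁ z₂ - (m:ℂ) * H2 (m-1) n z₁ z₂ := by
  cases m with
  | zero =>
    rw [H2_m_zero, H2_m_zero, pow_succ]
    push_cast
    ring
  | succ m =>
    simp only [Nat.add_sub_cancel]
    rw [H2_eq_sum (m+1) (n+1) (m+n+2) (by omega), H2_eq_sum (m+1) n (m+n+2) (by omega),
      H2_eq_sum m n (m+n+2) (by omega)]
    rw [show m+n+2 = (m+n+1)+1 from rfl]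
    rw [Finset.sum_range_succ'
      (fun k => (-1:ℂ)^k * (Nat.factorial k) * (Nat.choose (m+1) k) * (Nat.choose (n+1) k)
        * z₁^(m+1-k) * z₂^(n+1-k)) (m+n+1),
      Finset.sum_range_succ'
      (fun k => (-1:ℂ)^k * (Nat.factorial k) * (Nat.choose (m+1) k) * (Nat.choose n k)
        * z₁^(m+1-k) * z₂^(n-k)) (m+n+1),
      Finset.sum_range_succ
      (fun k => (-1:ℂ)^k * (Nat.factorial k) * (Nat.choose m k) * (Nat.choose n k)
        * z₁^(m-k) * z₂^(n-k)) (m+n+1)]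
    rw [show Nat.choose m (m+n+1) = 0 from Nat.choose_eq_zero_of_lt (by omega)]
    have hsum : (∑ k ∈ Finset.range (m+n+1),
        (-1:ℂ)^(k+1) * (Nat.factorial (k+1)) * (Nat.choose (m+1) (k+1)) * (Nat.choose (n+1) (k+1))
          * z₁^(m+1-(k+1)) * z₂^(n+1-(k+1)))
        = ∑ k ∈ Finset.range (m+n+1),
          (z₂ * ((-1:ℂ)^(k+1) * (Nat.factorial (k+1)) * (Nat.choose (m+1) (k+1)) * (Nat.choose n (k+1))
            * z₁^(m+1-(k+1)) * z₂^(n-(k+1)))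
          - ((m:ℂ)+1) * ((-1:ℂ)^k * (Nat.factorial k) * (Nat.choose m k) * (Nat.choose n k)
            * z₁^(m-k) * z₂^(n-k))) :=
      Finset.sum_congr rfl (fun k _ => Hpt m n k z₁ z₂)
    rw [hsum, Finset.sum_sub_distrib, ← Finset.mul_sum, ← Finset.mul_sum]
    simp only [Nat.sub_zero, Nat.factorial_zero, Nat.choose_zero_right, Nat.cast_one,
      Nat.cast_zero, mul_zero, zero_mul, pow_zero, one_mul, mul_one, add_zero]
    push_cast
    ring

lemma J_eq (n : ℕ) : ∀ (m : ℕ) (z₁ z₂ : ℂ), J m n z₁ z₂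
    = (Real.pi:ℂ) * I^(m+n) * Complex.exp (-(z₁*z₂)) * H2 m n z₁ z₂ := by
  induction n with
  | zero =>
    intro m
    induction m with
    | zero =>
      intro z₁ z₂
      rw [J_base, H2_zero_zero]
      simp
    | succ m ih =>
      intro z₁ z₂
      have h := recA m 0 z₁ z₂
      simp only [Nat.cast_zero, zero_mul, zero_add] at h
      rw [h, ih z₁ z₂, H2_n_zero, H2_n_zero]
      rw [show m+1+0 = (m+0)+1 from by omega, pow_succ, pow_succ]
      ring
  | succ n ihn =>
    intro m z₁ z₂
    have h := recB m n z₁ z₂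
    rw [h, ihn m z₁ z₂, ihn (m-1) z₁ z₂, HrecB m n z₁ z₂]
    cases m with
    | zero =>
      simp only [Nat.cast_zero, zero_mul, zero_add, sub_zero]
      rw [pow_succ]
      ring
    | succ m =>
      simp only [Nat.add_sub_cancel]
      push_cast
      rw [show m+1+(n+1) = ((m+n)+1)+1 from by omega, show m+1+n = (m+n)+1 from by omega,
        pow_succ, pow_succ]
      linear_combination (((m:ℂ)+1) * (Real.pi:ℂ) * I^(m+n) * Complex.exp (-(z₁*z₂))
        * H2 m n z₁ z₂) * Complex.I_sq

lemma conj_eq (r s : ℝ) : (starRingEnd ℂ) ((r:ℂ) + s*I) = (r:ℂ) - s*I := by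
  rw [map_add, map_mul, Complex.conj_I, Complex.conj_ofReal, Complex.conj_ofReal,
    mul_neg, ← sub_eq_add_neg]

theorem H2_integral_representation (m n : ℕ) (z₁ z₂ : ℂ) :
    Complex.exp (-(z₁ * z₂)) * H2 m n z₁ z₂ =
      1 / ((Real.pi : ℂ) * Complex.I ^ (m + n)) *
        ∫ p : ℝ × ℝ,
          (starRingEnd ℂ ((p.1 : ℂ) + p.2 * Complex.I)) ^ m *
            ((p.1 : ℂ) + p.2 * Complex.I) ^ n *
            Complex.exp (-(((p.1 : ℂ) + p.2 * Complex.I) *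
                starRingEnd ℂ ((p.1 : ℂ) + p.2 * Complex.I)) +
              Complex.I * z₁ * ((p.1 : ℂ) + p.2 * Complex.I) +
              Complex.I * z₂ * starRingEnd ℂ ((p.1 : ℂ) + p.2 * Complex.I)) := by
  have hJ : (∫ p : ℝ × ℝ,
          (starRingEnd ℂ ((p.1 : ℂ) + p.2 * Complex.I)) ^ m *
            ((p.1 : ℂ) + p.2 * Complex.I) ^ n *
            Complex.exp (-(((p.1 : ℂ) + p.2 * Complex.I) *
                starRingEnd ℂ ((p.1 : ℂ) + p.2 * Complex.I)) +
              Complex.I * z₁ * ((p.1 : ℂ) + p.2 * Complex.I) +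
              Complex.I * z₂ * starRingEnd ℂ ((p.1 : ℂ) + p.2 * Complex.I)))
      = J m n z₁ z₂ := by
    unfold J g2
    simp only [conj_eq]
  rw [hJ, J_eq n m z₁ z₂]
  have hne : (Real.pi : ℂ) * Complex.I ^ (m + n) ≠ 0 :=
    mul_ne_zero (Complex.ofReal_ne_zero.mpr Real.pi_ne_zero)
      (pow_ne_zero _ Complex.I_ne_zero)
  field_simp
end

section
/- For every nonnegative integer n, every nonzero complex number z, and all complex numbers w₁, w₂, we have H_n((w₁+w₂)/2) = zⁿ ∑_{j=0}^{n} C(n,j) H_{j,n-j}(z w₁, w₂/z) z^{-2j}, where H_n is normalized so that ∑_n H_n(x) tⁿ/n! = exp(2xt - t²) and H_{j,n-j} are the two-variable (complex) Hermite polynomials. -/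
open Complex

lemma fac_ne (m : ℕ) : ((m.factorial : ℂ)) ≠ 0 :=
  Nat.cast_ne_zero.2 (Nat.factorial_ne_zero m)

lemma coeff_eq (n k i : ℕ) (hk : 2*k ≤ n) (hi : i ≤ n - 2*k) :
    (n.factorial : ℂ) * (Nat.choose (n-2*k) i) / (k.factorial * (n-2*k).factorial)
    = (k.factorial) * (Nat.choose n (k+i)) * (Nat.choose (k+i) k) * (Nat.choose (n-(k+i)) k) := by
  obtain ⟨a, ha⟩ : ∃ a, n = 2*k+i+a := ⟨n - (2*k+i), by omega⟩
  subst ha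
  rw [show 2*k+i+a - 2*k = i + a by omega, show 2*k+i+a-(k+i) = k + a by omega,
    Nat.cast_choose ℂ (show i ≤ i + a by omega),
    Nat.cast_choose ℂ (show k+i ≤ 2*k+i+a by omega),
    Nat.cast_choose ℂ (show k ≤ k + i by omega),
    Nat.cast_choose ℂ (show k ≤ k + a by omega),
    show i + a - i = a by omega, show 2*k+i+a-(k+i) = k+a by omega,
    show k+i-k = i by omega, show k+a-k = a by omega]
  have h1 := fac_ne (i+a); have h2 := fac_ne (k+i); have h3 := fac_ne (k+a)
  field_simp [fac_ne]

theorem hermite_H2_expansion (n : ℕ) (z w₁ w₂ : ℂ) (hz : z ≠ 0) :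
    Hpoly n ((w₁ + w₂) / 2) =
      z ^ n * ∑ j ∈ Finset.range (n + 1),
        (Nat.choose n j : ℂ) * H2 j (n - j) (z * w₁) (w₂ / z) / z ^ (2 * j) := by
  trans (∑ j ∈ Finset.range (n+1), ∑ k ∈ Finset.range (n+1),
    (-1:ℂ)^k * (Nat.factorial k) * (Nat.choose n j) * (Nat.choose j k) * (Nat.choose (n-j) k)
      * w₁^(j-k) * w₂^(n-j-k))
  · -- LHS = common double sum
    rw [Finset.sum_comm, Hpoly]
    rw [← Finset.sum_subset (Finset.range_subset_range.mpr (by omega : n/2 + 1 ≤ n+1))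
        (fun k _ hk => Finset.sum_eq_zero fun j hj => by
          have hk' : n < 2 * k := by simp at hk; omega
          rcases Nat.lt_or_ge j k with h | h
          · rw [Nat.choose_eq_zero_of_lt h]; ring
          · rw [Nat.choose_eq_zero_of_lt (by omega : n - j < k)]; ring)]
    rw [Finset.mul_sum]
    refine Finset.sum_congr rfl fun k hk => ?_
    have hkn : 2 * k ≤ n := by
      have := Finset.mem_range.mp hk; omega
    have h2 : (2 : ℂ) * ((w₁ + w₂)/2) = w₁ + w₂ := by ring
    rw [h2, add_pow]
    rw [← Finset.sum_subset (show Finset.Ico k (n-k+1) ⊆ Finset.range (n+1) by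
          intro j hj; simp at hj ⊢; omega)
        (fun j hj hj' => by
          simp only [Finset.mem_Ico, Finset.mem_range, not_and, not_lt] at hj hj'
          rcases Nat.lt_or_ge j k with h | h
          · rw [Nat.choose_eq_zero_of_lt h]; ring
          · rw [Nat.choose_eq_zero_of_lt (by omega : n - j < k)]; ring)]
    rw [Finset.sum_Ico_eq_sum_range, show n - k + 1 - k = n - 2*k + 1 by omega]
    rw [Finset.mul_sum, Finset.sum_div, Finset.mul_sum]
    refine Finset.sum_congr rfl fun i hi => ?_
    have hin : i ≤ n - 2*k := by have := Finset.mem_range.mp hi; omega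
    rw [show k + i - k = i by omega, show n - (k+i) - k = n - 2*k - i by omega]
    have hc := coeff_eq n k i hkn hin
    linear_combination ((-1:ℂ)^k * w₁^i * w₂^(n-2*k-i)) * hc
  · -- common double sum = RHS
    rw [Finset.mul_sum]
    refine Finset.sum_congr rfl fun j hj => ?_
    have hjn : j ≤ n := by simpa using Nat.lt_succ_iff.mp (Finset.mem_range.mp hj)
    rw [H2]
    rw [← Finset.sum_subset (Finset.range_subset_range.mpr (by omega : min j (n-j) + 1 ≤ n+1))
      (fun k _ hk => by
        rcases Nat.lt_or_ge j (n-j) with h | h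
        · rw [Nat.choose_eq_zero_of_lt (by simp at hk; omega : j < k)]; ring
        · rw [Nat.choose_eq_zero_of_lt (by simp at hk; omega : n - j < k)]; ring)]
    rw [Finset.mul_sum, Finset.sum_div, Finset.mul_sum]
    refine Finset.sum_congr rfl fun k _ => ?_
    rcases Nat.lt_or_ge (min j (n-j)) k with h | h
    · rcases Nat.lt_or_ge j (n-j) with h' | h'
      · rw [Nat.choose_eq_zero_of_lt (by omega : j < k)]; ring
      · rw [Nat.choose_eq_zero_of_lt (by omega : n - j < k)]; ring
    · have hk1 : k ≤ j := le_trans h (min_le_left _ _)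
      have hk2 : k ≤ n - j := le_trans h (min_le_right _ _)
      rw [mul_pow, div_pow]
      have h1 : z^(2*j) * z^(n-j-k) = z^n * z^(j-k) := by
        rw [← pow_add, ← pow_add]; congr 1; omega
      field_simp [hz]
      linear_combination ((Nat.factorial k) * (Nat.choose n j) * (Nat.choose j k)
        * (Nat.choose (n-j) k) * w₁^(j-k) * w₂^(n-j-k)) * h1
end

section
/- For every nonnegative integer n, every real ρ > 0, and every nonzero complex z, one has H_n(ρ(z + z⁻¹)/2) = (n!/(-ρz)ⁿ) ∑_{j=0}^{n} ((-ρ²z²)^j / j!) L_{n-j}^{(2j-n)}(ρ²), where L_{n-j}^{(2j-n)} is the generalized Laguerre polynomial (with possibly negative integer parameter, defined via L_n^{(α)}(x) = ∑_{k=0}^n (-1)^k C(n+α, n-k) x^k/k! using generalized binomial coefficients). -/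
/-!
Put `u = ρ z` and `v = ρ / z`, so that the argument is `(u + v) / 2` and `u v = ρ²`. Since
`(2j - n) + (n - j) = j`, the generalized binomial coefficients in `L_{n-j}^{(2j-n)}` are the
ordinary `C(j, n - j - k)`, and the right-hand side becomes the coefficient of `tⁿ` in
`exp(ut - t²) · exp(vt)`, while the left-hand side is that of `exp((u + v)t - t²)`. On finite sums
this is the addition formula `H_n(x + y) = ∑ C(n, k) (2y)^k H_{n-k}(x)` combined with
`(-u)^m H_m(u/2) = m! ∑_j C(j, m - j) (-u²)^j / j!`, the expansion of `exp(ut - t²)` in powers of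
`ut - t²`.
-/

open Complex

open Finset Nat

theorem Hpoly_add (n : ℕ) (x y : ℂ) :
    Hpoly n (x + y) = ∑ k ∈ range (n + 1), n.choose k * (2 * y) ^ k * Hpoly (n - k) x := by
  let term : ℕ → ℕ → ℂ := fun K k =>
    (-1) ^ K * (2 * y) ^ k * (2 * x) ^ (n - 2 * K - k) / (K ! * k ! * (n - 2 * K - k)!)
  calc Hpoly n (x + y)
        = n ! * ∑ K ∈ range (n / 2 + 1), ∑ k ∈ range (n - 2 * K + 1), term K k := by
        rw [Hpoly]
        refine congrArg _ (sum_congr rfl fun K _ => ?_)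
        rw [show 2 * (x + y) = 2 * y + 2 * x by ring, add_pow, mul_sum, sum_div]
        refine sum_congr rfl fun k hk => ?_
        have : ((n - 2 * K)! : ℂ) ≠ 0 := cast_ne_zero.2 (factorial_ne_zero _)
        rw [cast_choose ℂ (Nat.lt_add_one_iff.1 (mem_range.1 hk))]
        field_simp
        ring
    _ = n ! * ∑ k ∈ range (n + 1), ∑ K ∈ range ((n - k) / 2 + 1), term K k := by
        rw [sum_comm' (t' := range (n + 1)) (s' := fun k => range ((n - k) / 2 + 1))]
        intro K k
        simp only [mem_range]
        omega
    _ = _ := by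
        rw [mul_sum]
        refine sum_congr rfl fun k hk => ?_
        rw [Hpoly, mul_sum, mul_sum, mul_sum]
        refine sum_congr rfl fun K _ => ?_
        have : ((n - k)! : ℂ) ≠ 0 := cast_ne_zero.2 (factorial_ne_zero _)
        rw [cast_choose ℂ (Nat.lt_add_one_iff.1 (mem_range.1 hk)),
          show n - k - 2 * K = n - 2 * K - k by omega]
        field_simp
        ring

theorem neg_pow_mul_Hpoly_div_two (m : ℕ) (u : ℂ) :
    (-u) ^ m * Hpoly m (u / 2) =
      m ! * ∑ j ∈ range (m + 1), j.choose (m - j) * (-u ^ 2) ^ j / j ! := by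
  let f : ℕ → ℂ := fun j => j.choose (m - j) * (-u ^ 2) ^ j / (j ! : ℂ)
  have hvanish : ∀ K ∈ range (m + 1), K ∉ range (m / 2 + 1) → f (m - K) = 0 := by
    intro K hKm hK
    simp only [mem_range] at hKm hK
    simp [f, choose_eq_zero_of_lt (by omega : m - K < m - (m - K))]
  rw [Hpoly, mul_left_comm, mul_sum, ← sum_range_reflect f, Nat.add_sub_cancel,
    ← sum_subset (range_subset_range.2 (by omega : m / 2 + 1 ≤ m + 1)) hvanish]
  refine congrArg _ (sum_congr rfl fun K hK => ?_)
  rw [mem_range] at hK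
  obtain ⟨r, rfl⟩ : ∃ r, m = 2 * K + r := ⟨m - 2 * K, by omega⟩
  have : ((K + r)! : ℂ) ≠ 0 := cast_ne_zero.2 (factorial_ne_zero _)
  simp only [f]
  rw [show 2 * K + r - K = K + r by omega, show 2 * K + r - (K + r) = K by omega,
    show 2 * K + r - 2 * K = r by omega, cast_add_choose, pow_add, pow_mul, neg_sq]
  field_simp
  ring

theorem prod_Icc_intCast_add_eq_descFactorial {α : ℤ} {m N : ℕ} (h : α + m = N) (k : ℕ) :
    ∏ i ∈ Icc (k + 1) m, ((α : ℂ) + (i : ℕ)) = N.descFactorial (m - k) := by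
  rw [← descPochhammer_eval_eq_descFactorial, descPochhammer_eval_eq_prod_range,
    ← Ico_add_one_right_eq_Icc, prod_Ico_eq_prod_range, ← prod_range_reflect]
  refine prod_congr (by congr 1; omega) fun j hj => ?_
  rw [mem_range] at hj
  obtain ⟨r, rfl⟩ : ∃ r, m = k + 1 + j + r := ⟨m - k - 1 - j, by omega⟩
  have hN : (N : ℂ) = α + (k + 1 + j + r : ℕ) := by exact_mod_cast h.symm
  rw [hN, show k + 1 + j + r + 1 - (k + 1) - 1 - j = r by omega]
  push_cast
  ring

theorem lagC_eq_sum_choose {α : ℤ} {m N : ℕ} (h : α + m = N) (x : ℂ) :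
    lagC m α x = ∑ k ∈ range (m + 1), (-x) ^ k / k ! * N.choose (m - k) := by
  refine sum_congr rfl fun k _ => ?_
  have : ((m - k)! : ℂ) ≠ 0 := cast_ne_zero.2 (factorial_ne_zero _)
  rw [prod_Icc_intCast_add_eq_descFactorial h, descFactorial_eq_factorial_mul_choose]
  push_cast
  field_simp

theorem Hpoly_add_div_two_eq_sum_lagC (n : ℕ) {u : ℂ} (hu : u ≠ 0) (v : ℂ) :
    Hpoly n ((u + v) / 2) =
      n ! / (-u) ^ n *
        ∑ j ∈ range (n + 1), (-u ^ 2) ^ j / j ! * lagC (n - j) (2 * j - n) (u * v) := by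
  calc Hpoly n ((u + v) / 2)
        = ∑ k ∈ range (n + 1), n.choose k * v ^ k * Hpoly (n - k) (u / 2) := by
        simp only [add_div, Hpoly_add, show 2 * (v / 2) = v by ring]
    _ = ∑ k ∈ range (n + 1), ∑ j ∈ range (n - k + 1),
          n ! / (-u) ^ n *
            ((-u ^ 2) ^ j / j ! * ((-(u * v)) ^ k / k ! * j.choose (n - j - k))) := by
        refine sum_congr rfl fun k hk => ?_
        obtain ⟨m, rfl⟩ : ∃ m, n = k + m := ⟨n - k, by rw [mem_range] at hk; omega⟩
        have hH : Hpoly m (u / 2) =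
            m ! / (-u) ^ m * ∑ j ∈ range (m + 1), j.choose (m - j) * (-u ^ 2) ^ j / j ! := by
          rw [div_mul_eq_mul_div, eq_div_iff (pow_ne_zero _ (neg_ne_zero.2 hu)), mul_comm]
          exact neg_pow_mul_Hpoly_div_two m u
        rw [Nat.add_sub_cancel_left, hH, mul_sum, mul_sum]
        refine sum_congr rfl fun j _ => ?_
        rw [show k + m - j - k = m - j by omega, cast_add_choose, pow_add, neg_mul_eq_neg_mul,
          mul_pow]
        have : (-u) ^ k ≠ 0 := pow_ne_zero _ (neg_ne_zero.2 hu)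
        have : (-u) ^ m ≠ 0 := pow_ne_zero _ (neg_ne_zero.2 hu)
        have : (m ! : ℂ) ≠ 0 := cast_ne_zero.2 (factorial_ne_zero _)
        field_simp
    _ = ∑ j ∈ range (n + 1), ∑ k ∈ range (n - j + 1),
          n ! / (-u) ^ n *
            ((-u ^ 2) ^ j / j ! * ((-(u * v)) ^ k / k ! * j.choose (n - j - k))) := by
        rw [sum_comm' (t' := range (n + 1)) (s' := fun j => range (n - j + 1))]
        intro k j
        simp only [mem_range]
        omega
    _ = _ := by
        rw [mul_sum]
        refine sum_congr rfl fun j hj => ?_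
        have hα : (2 * j - n : ℤ) + (n - j : ℕ) = j := by
          rw [mem_range] at hj
          push_cast [Nat.cast_sub (by omega : j ≤ n)]
          ring
        rw [lagC_eq_sum_choose hα, mul_sum, mul_sum]

theorem hermite_laguerre_expansion (n : ℕ) (ρ : ℝ) (hρ : 0 < ρ) (z : ℂ) (hz : z ≠ 0) :
    Hpoly n ((ρ : ℂ) * (z + z⁻¹) / 2) =
      (Nat.factorial n : ℂ) / (-(ρ : ℂ) * z) ^ n *
        ∑ j ∈ Finset.range (n + 1),
          (-(ρ : ℂ) ^ 2 * z ^ 2) ^ j / (Nat.factorial j) *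
            lagC (n - j) (2 * (j : ℤ) - n) ((ρ : ℂ) ^ 2) := by
  have hρz : (ρ : ℂ) * z ≠ 0 := mul_ne_zero (ofReal_ne_zero.2 hρ.ne') hz
  have key := Hpoly_add_div_two_eq_sum_lagC n hρz (ρ * z⁻¹)
  rw [show (ρ : ℂ) * z * (ρ * z⁻¹) = ρ ^ 2 by field_simp,
    show ((ρ : ℂ) * z + ρ * z⁻¹) / 2 = ρ * (z + z⁻¹) / 2 by ring] at key
  convert key using 3 <;> ring
end

section
/- For all nonnegative integers m, n and complex numbers z₁, z₂, w₁, w₂, one has the translation identity: e^{-(w₁w₂ + z₁w₂ + z₂w₁)} H_{m,n}(z₁+w₁, z₂+w₂) = ∑_{j,k≥0} ((-w₁)^j (-w₂)^k / (j! k!)) H_{m+k, n+j}(z₁, z₂), with the series converging absolutely. -/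
open Complex

lemma H2_eq (m n : ℕ) (x y : ℂ) :
    H2 m n x y = ∑ k ∈ Finset.range (m + 1),
      (-1 : ℂ) ^ k * (Nat.factorial k) * (Nat.choose m k) * (Nat.choose n k) *
        x ^ (m - k) * y ^ (n - k) := by
  refine Finset.sum_subset (Finset.range_subset_range.2 (by omega)) ?_
  intro k hk hk'
  simp only [Finset.mem_range] at hk hk'
  have : n < k := by omega
  simp [Nat.choose_eq_zero_of_lt this]

lemma H2_symm (m n : ℕ) (x y : ℂ) : H2 m n x y = H2 n m y x := by
  unfold H2
  rw [min_comm]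
  exact Finset.sum_congr rfl fun k _ => by ring

lemma H2_zero_left (n : ℕ) (x y : ℂ) : H2 0 n x y = y ^ n := by
  simp [H2]

lemma H2_rec (m n : ℕ) (x y : ℂ) :
    H2 m (n + 1) x y = y * H2 m n x y - (m : ℂ) * H2 (m - 1) n x y := by
  cases m with
  | zero => simp [H2_zero_left, pow_succ, mul_comm]
  | succ m =>
    rw [H2_eq, H2_eq (m+1) n]
    simp only [Nat.add_sub_cancel]
    rw [H2_eq m n]
    rw [Finset.sum_range_succ' _ (m + 1), Finset.mul_sum, Finset.mul_sum,
      Finset.sum_range_succ' (fun k => y * _) (m + 1)]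
    have main : ∀ l ∈ Finset.range (m + 1),
        (-1:ℂ) ^ (l+1) * ((l+1).factorial : ℂ) * ((m+1).choose (l+1) : ℂ) *
            ((n+1).choose (l+1) : ℂ) * x ^ (m + 1 - (l+1)) * y ^ (n + 1 - (l+1))
        = y * ((-1:ℂ) ^ (l+1) * ((l+1).factorial : ℂ) * ((m+1).choose (l+1) : ℂ) *
              (n.choose (l+1) : ℂ) * x ^ (m + 1 - (l+1)) * y ^ (n - (l+1)))
          - ((m:ℂ) + 1) * ((-1:ℂ) ^ l * (l.factorial : ℂ) * (m.choose l : ℂ) *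
              (n.choose l : ℂ) * x ^ (m - l) * y ^ (n - l)) := by
      intro l hl
      have hl' : l ≤ m := by simpa [Nat.lt_succ_iff] using hl
      have hmc : ((m+1 : ℕ) : ℂ) * (Nat.choose m l) = (Nat.choose (m+1) (l+1)) * (l+1) := by
        exact_mod_cast Nat.add_one_mul_choose_eq m l
      push_cast at hmc
      have hch : ((Nat.choose (n+1) (l+1) : ℕ) : ℂ) = Nat.choose n l + Nat.choose n (l+1) := by
        exact_mod_cast Nat.choose_succ_succ' n l
      have hfac : ((Nat.factorial (l+1) : ℕ) : ℂ) = (l+1) * Nat.factorial l := by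
        exact_mod_cast Nat.factorial_succ l
      have e1 : m + 1 - (l+1) = m - l := by omega
      have e2 : n + 1 - (l+1) = n - l := by omega
      rw [e1, e2, hch, hfac]
      rcases lt_or_ge l n with h | h
      · have e3 : y ^ (n - l) = y ^ (n - (l+1)) * y := by
          rw [← pow_succ]; congr 1; omega
        rw [e3]
        linear_combination ((-1:ℂ)^l * (Nat.factorial l : ℂ) * (Nat.choose n l : ℂ) *
          x ^ (m - l) * y ^ (n - (l+1)) * y) * hmc
      · have e4 : n - l = 0 := by omega
        have e5 : n - (l+1) = 0 := by omega
        rw [e4, e5, Nat.choose_eq_zero_of_lt (by omega : n < l + 1)]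
        push_cast
        linear_combination ((-1:ℂ)^l * (Nat.factorial l : ℂ) * (Nat.choose n l : ℂ) *
          x ^ (m - l)) * hmc
    rw [Finset.sum_congr rfl main, Finset.sum_sub_distrib]
    push_cast
    simp only [Nat.sub_zero, Nat.choose_zero_right, Nat.factorial_zero]
    ring

lemma hasDerivAt_H2 (m n : ℕ) (y x : ℂ) :
    HasDerivAt (fun x => H2 m n x y) ((m : ℂ) * H2 (m - 1) n x y) x := by
  have h1 : ∀ x : ℂ, H2 m n x y = ∑ k ∈ Finset.range (m + 1),
      (-1 : ℂ) ^ k * (Nat.factorial k) * (Nat.choose m k) * (Nat.choose n k) *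
        x ^ (m - k) * y ^ (n - k) := fun x => H2_eq m n x y
  simp only [h1]
  have h2 : HasDerivAt (fun x : ℂ => ∑ k ∈ Finset.range (m + 1),
      (-1 : ℂ) ^ k * (Nat.factorial k) * (Nat.choose m k) * (Nat.choose n k) *
        x ^ (m - k) * y ^ (n - k))
      (∑ k ∈ Finset.range (m + 1),
        (-1 : ℂ) ^ k * (Nat.factorial k) * (Nat.choose m k) * (Nat.choose n k) *
          (((m - k : ℕ) : ℂ) * x ^ (m - k - 1)) * y ^ (n - k)) x := by
    apply HasDerivAt.fun_sum
    intro k _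
    exact (((hasDerivAt_pow (m - k) x).const_mul
      ((-1 : ℂ) ^ k * (Nat.factorial k) * (Nat.choose m k) * (Nat.choose n k))).mul_const
      (y ^ (n - k)))
  convert h2 using 1
  cases m with
  | zero => simp
  | succ m =>
    rw [Nat.add_sub_cancel, H2_eq, Finset.sum_range_succ _ (m + 1)]
    simp only [Nat.sub_self, Nat.cast_zero, zero_mul, mul_zero, add_zero]
    rw [Finset.mul_sum]
    refine (Finset.sum_congr rfl fun k hk => ?_).symm
    have hk' : k ≤ m := by simpa [Nat.lt_succ_iff] using hk
    have e1 : m + 1 - k - 1 = m - k := by omega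
    have hmc : ((Nat.choose m k : ℕ) : ℂ) * (m + 1) =
        (Nat.choose (m+1) k : ℂ) * ((m : ℂ) + 1 - k) := by
      have := Nat.choose_mul_succ_eq m k
      have e2 : ((m + 1 - k : ℕ) : ℂ) = (m : ℂ) + 1 - k := by
        push_cast [Nat.cast_sub (by omega : k ≤ m + 1)]; ring
      calc ((Nat.choose m k : ℕ) : ℂ) * (m + 1)
          = ((Nat.choose m k * (m + 1) : ℕ) : ℂ) := by push_cast; ring
        _ = ((Nat.choose (m+1) k * (m + 1 - k) : ℕ) : ℂ) := by rw [this]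
        _ = _ := by push_cast [Nat.cast_sub (by omega : k ≤ m + 1)]; ring
    have e2 : ((m + 1 - k : ℕ) : ℂ) = (m : ℂ) + 1 - k := by
      push_cast [Nat.cast_sub (by omega : k ≤ m + 1)]; ring
    rw [e1, e2]
    push_cast
    linear_combination (-(-1:ℂ)^k * (Nat.factorial k : ℂ) * (Nat.choose n k : ℂ) *
      x ^ (m - k) * y ^ (n - k)) * hmc

lemma hasDerivAt_G (m n : ℕ) (x y t : ℂ) :
    HasDerivAt (fun t => Complex.exp (t * y) * H2 m n (x - t) y)
      (Complex.exp (t * y) * H2 m (n + 1) (x - t) y) t := by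
  have h1 : HasDerivAt (fun t : ℂ => Complex.exp (t * y)) (Complex.exp (t * y) * y) t := by
    simpa using ((hasDerivAt_id t).mul_const y).cexp
  have h2 : HasDerivAt (fun t : ℂ => H2 m n (x - t) y)
      ((m : ℂ) * H2 (m - 1) n (x - t) y * (-1)) t :=
    (hasDerivAt_H2 m n y (x - t)).comp t ((hasDerivAt_id t).const_sub x)
  have h3 := h1.mul h2
  convert h3 using 1
  · rfl
  · rfl
  · rfl
  rw [H2_rec]
  ring

lemma iteratedDeriv_G (m : ℕ) (x y : ℂ) : ∀ (j n : ℕ) (t : ℂ),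
    iteratedDeriv j (fun t => Complex.exp (t * y) * H2 m n (x - t) y) t
      = Complex.exp (t * y) * H2 m (n + j) (x - t) y := by
  intro j
  induction j with
  | zero => intro n t; simp
  | succ j ih =>
    intro n t
    rw [iteratedDeriv_succ']
    have hd : deriv (fun t => Complex.exp (t * y) * H2 m n (x - t) y)
        = fun t => Complex.exp (t * y) * H2 m (n + 1) (x - t) y :=
      funext fun t => (hasDerivAt_G m n x y t).deriv
    rw [hd, ih (n + 1) t, show n + 1 + j = n + (j + 1) by omega]

lemma hasSum_A (m n : ℕ) (z₁ z₂ w : ℂ) :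
    HasSum (fun j : ℕ => (-w) ^ j / (Nat.factorial j : ℂ) * H2 m (n + j) z₁ z₂)
      (Complex.exp (-(w * z₂)) * H2 m n (z₁ + w) z₂) := by
  have hf : Differentiable ℂ (fun t => Complex.exp (t * z₂) * H2 m n (z₁ - t) z₂) :=
    fun t => (hasDerivAt_G m n z₁ z₂ t).differentiableAt
  have h := Complex.hasSum_taylorSeries_of_entire hf 0 (-w)
  simp only [sub_zero, iteratedDeriv_G, smul_eq_mul, zero_mul, Complex.exp_zero, one_mul] at h
  have hfun : (fun j : ℕ => (-w) ^ j / (Nat.factorial j : ℂ) * H2 m (n + j) z₁ z₂)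
      = fun j : ℕ => ((Nat.factorial j : ℂ))⁻¹ * ((-w) ^ j * H2 m (n + j) (z₁ - 0) z₂) := by
    funext j
    rw [sub_zero]
    field_simp
  rw [hfun]
  simpa only [sub_zero, neg_mul, sub_neg_eq_add] using h

lemma hasSum_B (m n : ℕ) (z₁ z₂ w : ℂ) :
    HasSum (fun k : ℕ => (-w) ^ k / (Nat.factorial k : ℂ) * H2 (m + k) n z₁ z₂)
      (Complex.exp (-(w * z₁)) * H2 m n z₁ (z₂ + w)) := by
  have h := hasSum_A n m z₂ z₁ w
  simp only [show ∀ k, H2 n (m + k) z₂ z₁ = H2 (m + k) n z₁ z₂ from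
      fun k => (H2_symm (m + k) n z₁ z₂).symm,
    show H2 n m (z₂ + w) z₁ = H2 m n z₁ (z₂ + w) from (H2_symm m n z₁ (z₂ + w)).symm] at h
  exact h

noncomputable def H2abs (m n : ℕ) (x y : ℝ) : ℝ :=
  ∑ k ∈ Finset.range (min m n + 1),
    (Nat.factorial k : ℝ) * (Nat.choose m k) * (Nat.choose n k) * x ^ (m - k) * y ^ (n - k)

lemma H2_I (m n : ℕ) (x y : ℝ) :
    H2 m n ((I : ℂ) * x) (I * y) = I ^ (m + n) * (H2abs m n x y : ℂ) := by
  unfold H2 H2abs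
  push_cast
  rw [Finset.mul_sum]
  refine Finset.sum_congr rfl fun k hk => ?_
  have hk' : k ≤ min m n := by simpa [Nat.lt_succ_iff] using hk
  have hI : (I : ℂ) ^ (m + n) = I ^ (m - k) * I ^ (n - k) * (-1 : ℂ) ^ k := by
    have e : (m - k) + ((n - k) + 2 * k) = m + n := by omega
    rw [← e, pow_add, pow_add, pow_mul, Complex.I_sq]
    ring
  rw [hI, mul_pow, mul_pow]
  ring

lemma H2_norm_le (m n : ℕ) (z₁ z₂ : ℂ) : ‖H2 m n z₁ z₂‖ ≤ H2abs m n ‖z₁‖ ‖z₂‖ := by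
  unfold H2 H2abs
  refine le_trans (norm_sum_le _ _) (le_of_eq (Finset.sum_congr rfl fun k _ => ?_))
  simp [norm_mul, norm_pow]

lemma negI_mul_I_pow (k : ℕ) : ((-I : ℂ)) ^ k * I ^ k = 1 := by
  rw [← mul_pow]
  simp [Complex.I_mul_I]

lemma hasSum_abs_A (m n : ℕ) (a b c : ℝ) :
    HasSum (fun j : ℕ => (c ^ j / (Nat.factorial j : ℝ) * H2abs m (n + j) a b : ℝ))
      (Real.exp (c * b) * H2abs m n (a + c) b) := by
  rw [← Complex.hasSum_ofReal]
  have h := (hasSum_A m n ((I : ℂ) * a) (I * b) (I * c)).mul_left ((I ^ (m + n))⁻¹)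
  have hfun : (fun j : ℕ => (I ^ (m + n) : ℂ)⁻¹ *
      ((-(I * c)) ^ j / (Nat.factorial j : ℂ) * H2 m (n + j) (I * a) (I * b)))
      = fun j : ℕ => ((c ^ j / (Nat.factorial j : ℝ) * H2abs m (n + j) a b : ℝ) : ℂ) := by
    funext j
    rw [H2_I, show m + (n + j) = (m + n) + j by omega, pow_add,
      show (-((I : ℂ) * c)) ^ j = (-I) ^ j * (c : ℂ) ^ j by rw [← neg_mul, mul_pow]]
    have hIne : (I ^ (m + n) : ℂ) ≠ 0 := pow_ne_zero _ I_ne_zero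
    have hinv : (I ^ (m + n) : ℂ)⁻¹ * I ^ (m + n) = 1 := inv_mul_cancel₀ hIne
    push_cast
    linear_combination ((c : ℂ) ^ j / (Nat.factorial j : ℂ) * (H2abs m (n + j) a b : ℂ) *
        ((-I : ℂ) ^ j * I ^ j)) * hinv +
      ((c : ℂ) ^ j / (Nat.factorial j : ℂ) * (H2abs m (n + j) a b : ℂ)) * negI_mul_I_pow j
  rw [hfun] at h
  convert h using 1
  · rfl
  rw [show (I : ℂ) * a + I * c = I * ((a + c : ℝ) : ℂ) by push_cast; ring, H2_I,
    show -((I : ℂ) * c * (I * b)) = ((c * b : ℝ) : ℂ) by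
      push_cast; rw [show ((I:ℂ) * c * (I * b)) = (I * I) * (c * b) by ring, Complex.I_mul_I]; ring]
  rw [← Complex.ofReal_exp]
  have hIne : (I ^ (m + n) : ℂ) ≠ 0 := pow_ne_zero _ I_ne_zero
  have hinv : (I ^ (m + n) : ℂ)⁻¹ * I ^ (m + n) = 1 := inv_mul_cancel₀ hIne
  push_cast
  linear_combination (-(Complex.exp (c * b)) * (H2abs m n (a + c) b : ℂ)) * hinv

lemma H2abs_symm (m n : ℕ) (x y : ℝ) : H2abs m n x y = H2abs n m y x := by
  unfold H2abs
  rw [min_comm]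
  exact Finset.sum_congr rfl fun k _ => by ring

lemma hasSum_abs_B (m n : ℕ) (a b c : ℝ) :
    HasSum (fun k : ℕ => (c ^ k / (Nat.factorial k : ℝ) * H2abs (m + k) n a b : ℝ))
      (Real.exp (c * a) * H2abs m n a (b + c)) := by
  have h := hasSum_abs_A n m b a c
  simp only [show ∀ k, H2abs n (m + k) b a = H2abs (m + k) n a b from
      fun k => (H2abs_symm (m + k) n a b).symm,
    show H2abs n m (b + c) a = H2abs m n a (b + c) from (H2abs_symm m n a (b + c)).symm] at h
  exact h

lemma H2abs_nonneg (m n : ℕ) {x y : ℝ} (hx : 0 ≤ x) (hy : 0 ≤ y) : 0 ≤ H2abs m n x y := by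
  unfold H2abs
  refine Finset.sum_nonneg fun k _ => ?_
  positivity

theorem H2_translation (m n : ℕ) (z₁ z₂ w₁ w₂ : ℂ) :
    Summable (fun p : ℕ × ℕ =>
      ‖(-w₁) ^ p.1 * (-w₂) ^ p.2 / ((Nat.factorial p.1 : ℂ) * (Nat.factorial p.2)) *
        H2 (m + p.2) (n + p.1) z₁ z₂‖) ∧
    HasSum (fun p : ℕ × ℕ =>
      (-w₁) ^ p.1 * (-w₂) ^ p.2 / ((Nat.factorial p.1 : ℂ) * (Nat.factorial p.2)) *
        H2 (m + p.2) (n + p.1) z₁ z₂)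
      (Complex.exp (-(w₁ * w₂ + z₁ * w₂ + z₂ * w₁)) * H2 m n (z₁ + w₁) (z₂ + w₂)) := by
  set r₁ := ‖z₁‖; set r₂ := ‖z₂‖; set ρ₁ := ‖w₁‖; set ρ₂ := ‖w₂‖
  have hr₁ : 0 ≤ r₁ := norm_nonneg _
  have hr₂ : 0 ≤ r₂ := norm_nonneg _
  have hρ₁ : 0 ≤ ρ₁ := norm_nonneg _
  have hρ₂ : 0 ≤ ρ₂ := norm_nonneg _
  set P : ℕ × ℕ → ℝ := fun p =>
    ρ₁ ^ p.1 / (Nat.factorial p.1) * (ρ₂ ^ p.2 / (Nat.factorial p.2) *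
      H2abs (m + p.2) (n + p.1) r₁ r₂) with hP
  have hPnonneg : ∀ p, 0 ≤ P p := by
    intro p
    have h := H2abs_nonneg (m + p.2) (n + p.1) hr₁ hr₂
    simp only [hP]
    exact mul_nonneg (by positivity) (mul_nonneg (by positivity) h)
  have hPsummable : Summable P := by
    rw [summable_prod_of_nonneg hPnonneg]
    constructor
    · intro j
      have h := ((hasSum_abs_B m (n + j) r₁ r₂ ρ₂).summable).mul_left
        (ρ₁ ^ j / (Nat.factorial j : ℝ))
      simp only [hP]
      exact h
    · have htsum : ∀ j : ℕ, ∑' k, P (j, k)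
          = Real.exp (ρ₂ * r₁) * (ρ₁ ^ j / (Nat.factorial j) *
              H2abs m (n + j) r₁ (r₂ + ρ₂)) := by
        intro j
        simp only [hP]
        rw [((hasSum_abs_B m (n + j) r₁ r₂ ρ₂).mul_left
          (ρ₁ ^ j / (Nat.factorial j : ℝ))).tsum_eq]
        ring
      rw [funext htsum]
      exact ((hasSum_abs_A m n r₁ (r₂ + ρ₂) ρ₁).summable).mul_left (Real.exp (ρ₂ * r₁))
  have hbound : ∀ p : ℕ × ℕ,
      ‖(-w₁) ^ p.1 * (-w₂) ^ p.2 / ((Nat.factorial p.1 : ℂ) * (Nat.factorial p.2)) *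
        H2 (m + p.2) (n + p.1) z₁ z₂‖ ≤ P p := by
    rintro ⟨j, k⟩
    rw [norm_mul, norm_div, norm_mul, norm_mul, norm_pow, norm_pow, norm_neg, norm_neg]
    simp only [Complex.norm_natCast]
    have h1 := H2_norm_le (m + k) (n + j) z₁ z₂
    have h2 : (0 : ℝ) < Nat.factorial j * Nat.factorial k := by positivity
    simp only [hP]
    calc ρ₁ ^ j * ρ₂ ^ k / (Nat.factorial j * Nat.factorial k) * ‖H2 (m + k) (n + j) z₁ z₂‖
        ≤ ρ₁ ^ j * ρ₂ ^ k / (Nat.factorial j * Nat.factorial k) *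
            H2abs (m + k) (n + j) r₁ r₂ := by
          apply mul_le_mul_of_nonneg_left h1
          positivity
      _ = ρ₁ ^ j / (Nat.factorial j) * (ρ₂ ^ k / (Nat.factorial k) *
            H2abs (m + k) (n + j) r₁ r₂) := by ring
  have hnorm : Summable (fun p : ℕ × ℕ =>
      ‖(-w₁) ^ p.1 * (-w₂) ^ p.2 / ((Nat.factorial p.1 : ℂ) * (Nat.factorial p.2)) *
        H2 (m + p.2) (n + p.1) z₁ z₂‖) :=
    Summable.of_nonneg_of_le (fun p => norm_nonneg _) hbound hPsummable
  refine ⟨hnorm, ?_⟩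
  set A : ℕ × ℕ → ℂ := fun p =>
    (-w₁) ^ p.1 * (-w₂) ^ p.2 / ((Nat.factorial p.1 : ℂ) * (Nat.factorial p.2)) *
      H2 (m + p.2) (n + p.1) z₁ z₂ with hA
  have hAsummable : Summable A := hnorm.of_norm
  have hS : HasSum A (∑' p, A p) := hAsummable.hasSum
  set g : ℕ → ℂ := fun j => (-w₁) ^ j / (Nat.factorial j : ℂ) *
    (Complex.exp (-(w₂ * z₁)) * H2 m (n + j) z₁ (z₂ + w₂)) with hg
  have hfib : ∀ j : ℕ, HasSum (fun k => A (j, k)) (g j) := by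
    intro j
    have h := (hasSum_B m (n + j) z₁ z₂ w₂).mul_left ((-w₁) ^ j / (Nat.factorial j : ℂ))
    have : (fun k => (-w₁) ^ j / (Nat.factorial j : ℂ) *
        ((-w₂) ^ k / (Nat.factorial k : ℂ) * H2 (m + k) (n + j) z₁ z₂)) = fun k => A (j, k) := by
      funext k
      simp only [hA]
      ring
    rwa [this] at h
  have hgsum : HasSum g (∑' p, A p) := hS.prod_fiberwise hfib
  have hgsum2 : HasSum g (Complex.exp (-(w₁ * w₂ + z₁ * w₂ + z₂ * w₁)) *
      H2 m n (z₁ + w₁) (z₂ + w₂)) := by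
    have h := (hasSum_A m n z₁ (z₂ + w₂) w₁).mul_left (Complex.exp (-(w₂ * z₁)))
    have hfun : (fun j => Complex.exp (-(w₂ * z₁)) *
        ((-w₁) ^ j / (Nat.factorial j : ℂ) * H2 m (n + j) z₁ (z₂ + w₂))) = g := by
      funext j
      simp only [hg]
      ring
    rw [hfun] at h
    convert h using 1
    · rfl
    have e : -(w₁ * w₂ + z₁ * w₂ + z₂ * w₁) = -(w₂ * z₁) + -(w₁ * (z₂ + w₂)) := by ring
    rw [e, Complex.exp_add]
    ring
  rw [hgsum2.unique hgsum]
  exact hS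
end

section
/- Let N be a positive integer, A an N×N real symmetric positive definite matrix, and B ∈ ℝᴺ. Then ∫_{ℝᴺ} exp(-Xᵀ A X + 2i Bᵀ X) dX = √(πᴺ / det A) · exp(-Bᵀ A⁻¹ B). -/
/-!
A positive definite real matrix factors as `A = Cᵀ C` with `C` invertible, so with
`T = C⁻¹` we have `Tᵀ A T = 1`. The substitution `x = T y` turns `xᵀ A x` into `|y|²` and
`2 Bᵀ x` into `2 (Tᵀ B)ᵀ y`, at the cost of the Jacobian `|det T| = (det A)^(-1/2)`. The
remaining integral factors into one-dimensional integrals `∫ exp(-t² + 2ict) dt = √π exp(-c²)`,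
and `|Tᵀ B|² = Bᵀ A⁻¹ B` because `A⁻¹ = T Tᵀ`.
-/

open Complex MeasureTheory Matrix Real

variable {ι : Type*} [Fintype ι]

theorem Matrix.mulVec_dotProduct_mulVec_mulVec {R : Type*} [CommSemiring R]
    (A M : Matrix ι ι R) (x y : ι → R) :
    (M *ᵥ x) ⬝ᵥ A *ᵥ (M *ᵥ y) = x ⬝ᵥ (Mᵀ * A * M) *ᵥ y := by
  rw [← mulVec_mulVec, ← mulVec_mulVec, dotProduct_mulVec x Mᵀ, vecMul_transpose]

theorem Matrix.ofReal_dotProduct_mulVec (M : Matrix ι ι ℝ) (x y : ι → ℝ) :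
    ((x ⬝ᵥ M *ᵥ y : ℝ) : ℂ) = ∑ j, ∑ k, (M j k : ℂ) * x j * y k := by
  push_cast [dotProduct, mulVec, Finset.mul_sum]
  exact Finset.sum_congr rfl fun j _ ↦ Finset.sum_congr rfl fun k _ ↦ by ring

theorem integral_cexp_neg_dotProduct_self_add (c : ι → ℝ) :
    ∫ y : ι → ℝ, cexp (-(y ⬝ᵥ y : ℝ) + 2 * I * (c ⬝ᵥ y : ℝ)) =
      (√π : ℂ) ^ Fintype.card ι * cexp (-(c ⬝ᵥ c : ℝ)) := by
  have h := GaussianFourier.integral_cexp_neg_sum_mul_add (b := fun _ : ι ↦ 1) (by simp)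
    (fun i ↦ 2 * I * c i)
  have hsqrt : ((π : ℂ) / 1) ^ (1 / 2 : ℂ) = √π := by
    rw [div_one, Real.sqrt_eq_rpow, ofReal_cpow pi_nonneg]
    norm_num
  simp only [one_mul, hsqrt, Finset.prod_mul_distrib, Finset.prod_const, Finset.card_univ,
    ← Complex.exp_sum] at h
  convert h using 3
  · push_cast [dotProduct]
    simp only [sq, mul_assoc, Finset.mul_sum]
  · push_cast [dotProduct, ← Finset.sum_neg_distrib]
    refine Finset.sum_congr rfl fun i _ ↦ ?_
    ring_nf
    rw [I_sq]
    ring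

variable [DecidableEq ι]

theorem Matrix.integral_comp_mulVec {E : Type*} [NormedAddCommGroup E] [NormedSpace ℝ E]
    (M : Matrix ι ι ℝ) (hM : M.det ≠ 0) (f : (ι → ℝ) → E) :
    ∫ x, f (M *ᵥ x) = |M.det|⁻¹ • ∫ x, f x := by
  have : Invertible M := invertibleOfIsUnitDet M hM.isUnit
  have hemb : MeasurableEmbedding (M *ᵥ ·) :=
    (M.toLinearEquiv' this).toContinuousLinearEquiv.toHomeomorph.measurableEmbedding
  have hmap : Measure.map (M *ᵥ ·) volume = ENNReal.ofReal |M.det⁻¹| • volume := by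
    have := Real.map_linearMap_volume_pi_eq_smul_volume_pi
      (f := Matrix.toLin' M) (by rwa [LinearMap.det_toLin'])
    rwa [LinearMap.det_toLin'] at this
  rw [← hemb.integral_map, hmap, integral_smul_measure, ENNReal.toReal_ofReal (abs_nonneg _),
    abs_inv]

open scoped MatrixOrder in
theorem Matrix.PosDef.exists_transpose_mul_mul_eq_one {A : Matrix ι ι ℝ} (hA : A.PosDef) :
    ∃ T : Matrix ι ι ℝ, Tᵀ * A * T = 1 := by
  obtain ⟨C, hC, rfl⟩ :=
    CStarAlgebra.isStrictlyPositive_iff_eq_star_mul_self.mp hA.isStrictlyPositive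
  refine ⟨C⁻¹, ?_⟩
  have hCC : C * C⁻¹ = 1 := mul_nonsing_inv C ((isUnit_iff_isUnit_det C).mp hC)
  rw [star_eq_conjTranspose, conjTranspose_eq_transpose_of_trivial, Matrix.mul_assoc,
    Matrix.mul_assoc, hCC, Matrix.mul_one, ← transpose_mul, hCC, transpose_one]

theorem integral_cexp_neg_dotProduct_mulVec_add_of_transpose_mul_mul_eq_one
    {A T : Matrix ι ι ℝ} (hT : Tᵀ * A * T = 1) (B : ι → ℝ) :
    ∫ x : ι → ℝ, cexp (-(x ⬝ᵥ A *ᵥ x : ℝ) + 2 * I * (B ⬝ᵥ x : ℝ)) =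
      (√(π ^ Fintype.card ι / A.det) : ℂ) * cexp (-(B ⬝ᵥ A⁻¹ *ᵥ B : ℝ)) := by
  have hdet : T.det ^ 2 * A.det = 1 := by
    simpa [det_mul, det_transpose, sq, mul_right_comm] using congrArg det hT
  have hTdet : T.det ≠ 0 := fun h ↦ by simp [h] at hdet
  have hAinv : A⁻¹ = T * Tᵀ := inv_eq_left_inv (by rwa [Matrix.mul_assoc, mul_eq_one_comm])
  have hconst : √(π ^ Fintype.card ι / A.det) = |T.det| * √π ^ Fintype.card ι := by
    rw [eq_inv_of_mul_eq_one_right hdet, div_inv_eq_mul,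
      Real.sqrt_eq_iff_eq_sq (by positivity) (by positivity), mul_pow, sq_abs, ← pow_mul,
      mul_comm _ 2, pow_mul, sq_sqrt pi_nonneg, mul_comm]
  set f : (ι → ℝ) → ℂ := fun x ↦ cexp (-(x ⬝ᵥ A *ᵥ x : ℝ) + 2 * I * (B ⬝ᵥ x : ℝ))
  calc ∫ x, f x = |T.det| • ∫ y, f (T *ᵥ y) := by
        rw [integral_comp_mulVec T hTdet f, smul_inv_smul₀ (abs_ne_zero.mpr hTdet)]
    _ = |T.det| • ∫ y : ι → ℝ, cexp (-(y ⬝ᵥ y : ℝ) + 2 * I * ((Tᵀ *ᵥ B) ⬝ᵥ y : ℝ)) := by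
        simp_rw [f, mulVec_dotProduct_mulVec_mulVec, hT, one_mulVec, dotProduct_mulVec B,
          mulVec_transpose]
    _ = _ := by
        rw [integral_cexp_neg_dotProduct_self_add, hconst, hAinv, ← mulVec_mulVec,
          dotProduct_mulVec B, ← mulVec_transpose, real_smul]
        push_cast
        ring

theorem multivariate_gaussian_integral_general (N : ℕ)
    (A : Matrix (Fin N) (Fin N) ℝ) (hApd : A.PosDef) (B : Fin N → ℝ) :
    (∫ X : Fin N → ℝ,
        Complex.exp (-(∑ j : Fin N, ∑ k : Fin N, (A j k : ℂ) * X j * X k) +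
          2 * Complex.I * ∑ j : Fin N, (B j : ℂ) * X j)) =
      (Real.sqrt (Real.pi ^ N / A.det) : ℂ) *
        Complex.exp (-(∑ j : Fin N, ∑ k : Fin N, ((A⁻¹) j k : ℂ) * B j * B k)) := by
  obtain ⟨T, hT⟩ := hApd.exists_transpose_mul_mul_eq_one
  have h := integral_cexp_neg_dotProduct_mulVec_add_of_transpose_mul_mul_eq_one hT B
  simp_rw [ofReal_dotProduct_mulVec, Fintype.card_fin] at h
  simpa only [dotProduct, ofReal_sum, ofReal_mul] using h

theorem multivariate_gaussian_integral (N : ℕ) (hN : 0 < N)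
    (A : Matrix (Fin N) (Fin N) ℝ) (hA : A.IsSymm) (hApd : A.PosDef) (B : Fin N → ℝ) :
    (∫ X : Fin N → ℝ,
        Complex.exp (-(∑ j : Fin N, ∑ k : Fin N, (A j k : ℂ) * X j * X k) +
          2 * Complex.I * ∑ j : Fin N, (B j : ℂ) * X j)) =
      (Real.sqrt (Real.pi ^ N / A.det) : ℂ) *
        Complex.exp (-(∑ j : Fin N, ∑ k : Fin N, ((A⁻¹) j k : ℂ) * B j * B k)) :=
  multivariate_gaussian_integral_general N A hApd B
end
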